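/- arXiv:2003.00160 — 10 statements merged into one kernel-verified Lean document; each statement's English description precedes it below -/
import Mathlib

section
/- Let Δ be a pure (d-1)-dimensional simplicial complex. Then for every j with 0 ≤ j ≤ d, h_{d-j}(Δ) - h_j(Δ) = (-1)^j ∑_{F ∈ Δ} binom(d-|F|, j) · ε_Δ(F), where ε_Δ(F) = χ̃(lk_Δ F) - (-1)^{d-1-|F|}. -/
open Finset

variable {V : Type*} [DecidableEq V]

/-- A simplicial complex: a collection of finite sets closed under taking subsets. -/
def IsComplex (Δ : Finset (Finset V)) : Prop := ∀ F ∈ Δ, ∀ G ⊆ F, G ∈ Δ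

/-- `Δ` is pure of dimension `d - 1`: every face is contained in a face with `d` vertices. -/
def IsPure (Δ : Finset (Finset V)) (d : ℕ) : Prop := ∀ F ∈ Δ, ∃ G ∈ Δ, F ⊆ G ∧ G.card = d

/-- `fNum Δ i` is the number of faces with `i` vertices, i.e. `f_{i-1}(Δ)`. -/
def fNum (Δ : Finset (Finset V)) (i : ℕ) : ℕ := (Δ.filter fun F => F.card = i).card

/-- The reduced Euler characteristic `χ̃(Δ) = ∑_{F ∈ Δ} (-1)^{|F|-1}` (empty face contributes `-1`). -/
def chi (Δ : Finset (Finset V)) : ℤ := ∑ F ∈ Δ, (-1 : ℤ) ^ (F.card + 1)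

/-- The link of a face `F` in `Δ`. -/
def link (Δ : Finset (Finset V)) (F : Finset V) : Finset (Finset V) :=
  Δ.filter fun G => Disjoint F G ∧ F ∪ G ∈ Δ

/-- The `h`-numbers of a `(d-1)`-dimensional complex:
`h_j = ∑_{i=0}^j (-1)^{j-i} C(d-i, j-i) f_{i-1}`. -/
def hNum (Δ : Finset (Finset V)) (d j : ℕ) : ℤ :=
  ∑ i ∈ Finset.range (j + 1), (-1 : ℤ) ^ (j - i) * ((d - i).choose (j - i)) * fNum Δ i

/-- The error function `ε_Δ(F) = χ̃(lk_Δ F) - (-1)^{d-1-|F|}`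
(the exponent `d + |F| + 1` has the same parity as `d - 1 - |F|`). -/
def eps (Δ : Finset (Finset V)) (d : ℕ) (F : Finset V) : ℤ :=
  chi (link Δ F) - (-1 : ℤ) ^ (d + F.card + 1)

lemma negpow_congr (a b : ℕ) (h : a % 2 = b % 2) : (-1:ℤ)^a = (-1)^b := by
  rw [← Nat.div_add_mod a 2, ← Nat.div_add_mod b 2, h, pow_add, pow_add, pow_mul, pow_mul]
  simp

lemma altsum (j : ℕ) : ∀ m d : ℕ, m ≤ d →
    ∑ k ∈ Finset.range (m+1), (-1:ℤ)^k * (m.choose k) * ((d-k).choose j)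
      = if m ≤ j then ((d-m).choose (j-m) : ℤ) else 0 := by
  intro m
  induction m with
  | zero => intro d _; simp
  | succ m ih =>
    intro d hd
    have hB : ∑ k ∈ Finset.range (m+1), (-1:ℤ)^k * (m.choose (k+1)) * ((d-(k+1)).choose j)
        = (d.choose j : ℤ) - ∑ k ∈ Finset.range (m+1), (-1:ℤ)^k * (m.choose k) * ((d-k).choose j) := by
      rw [Finset.sum_range_succ' (fun k => (-1:ℤ)^k * (m.choose k) * ((d-k).choose j)) m]
      rw [Finset.sum_range_succ]
      simp [pow_succ]
    have key : ∑ k ∈ Finset.range (m+2), (-1:ℤ)^k * ((m+1).choose k) * ((d-k).choose j)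
        = (∑ k ∈ Finset.range (m+1), (-1:ℤ)^k * (m.choose k) * ((d-k).choose j))
          - ∑ k ∈ Finset.range (m+1), (-1:ℤ)^k * (m.choose k) * (((d-1)-k).choose j) := by
      rw [Finset.sum_range_succ' (fun k => (-1:ℤ)^k * ((m+1).choose k) * ((d-k).choose j)) (m+1)]
      have : ∀ k ∈ Finset.range (m+1), (-1:ℤ)^(k+1) * ((m+1).choose (k+1)) * ((d-(k+1)).choose j)
          = -((-1:ℤ)^k * (m.choose k) * (((d-1)-k).choose j))
            - ((-1:ℤ)^k * (m.choose (k+1)) * ((d-(k+1)).choose j)) := by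
        intro k hk
        rw [Nat.choose_succ_succ]
        have h1 : d - (k+1) = (d-1) - k := by omega
        rw [h1]
        push_cast
        ring
      rw [Finset.sum_congr rfl this, Finset.sum_sub_distrib, hB]
      simp
      ring
    rw [key, ih d (by omega), ih (d-1) (by omega)]
    by_cases h1 : m + 1 ≤ j
    · rw [if_pos (by omega), if_pos (by omega), if_pos h1]
      obtain ⟨a, ha⟩ : ∃ a, d = m + 1 + a := ⟨d - (m+1), by omega⟩
      obtain ⟨b, hb⟩ : ∃ b, j = m + 1 + b := ⟨j - (m+1), by omega⟩
      subst ha hb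
      have e1 : m + 1 + a - m = a + 1 := by omega
      have e2 : m + 1 + b - m = b + 1 := by omega
      have e3 : m + 1 + a - 1 - m = a := by omega
      have e4 : m + 1 + a - (m+1) = a := by omega
      have e5 : m + 1 + b - (m+1) = b := by omega
      rw [e1, e2, e3, e4, e5, Nat.choose_succ_succ]
      push_cast; ring
    · by_cases h2 : m ≤ j
      · have hmj : m = j := by omega
        subst hmj
        rw [if_pos le_rfl, if_pos le_rfl, if_neg h1]
        simp
      · rw [if_neg h2, if_neg h2, if_neg h1]; ring

lemma powsum (s : Finset V) (g : ℕ → ℤ) :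
    ∑ F ∈ s.powerset, g F.card = ∑ k ∈ Finset.range (s.card+1), (s.card.choose k : ℤ) * g k := by
  rw [Finset.sum_powerset s (fun F => g F.card)]
  apply Finset.sum_congr rfl
  intro k hk
  have : ∀ F ∈ Finset.powersetCard k s, g F.card = g k := by
    intro F hF
    rw [(Finset.mem_powersetCard.mp hF).2]
  rw [Finset.sum_congr rfl this, Finset.sum_const, Finset.card_powersetCard]
  simp [mul_comm]

lemma sumcard (Δ : Finset (Finset V)) (d : ℕ) (hcard : ∀ F ∈ Δ, F.card ≤ d) (g : ℕ → ℤ) :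
    ∑ F ∈ Δ, g F.card = ∑ i ∈ Finset.range (d+1), (fNum Δ i : ℤ) * g i := by
  have h0 := Finset.sum_fiberwise_of_maps_to (s := Δ) (t := Finset.range (d+1))
      (g := fun F => F.card)
      (fun F hF => Finset.mem_range.mpr (show F.card < d + 1 from by have := hcard F hF; omega)) (fun F => g F.card)
  rw [← h0]
  apply Finset.sum_congr rfl
  intro i hi
  have : ∀ F ∈ Δ.filter (fun F => F.card = i), g F.card = g i := by
    intro F hF
    rw [(Finset.mem_filter.mp hF).2]
  rw [Finset.sum_congr rfl this, Finset.sum_const, fNum]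
  simp [mul_comm]

/-- generalized Dehn–Sommerville relations for pure simplicial complexes:
`h_{d-j}(Δ) - h_j(Δ) = (-1)^j ∑_{F ∈ Δ} C(d-|F|, j) ε_Δ(F)`. -/
theorem generalized_dehn_sommerville (Δ : Finset (Finset V)) (d : ℕ)
    (hcx : IsComplex Δ) (hne : ∅ ∈ Δ) (hpure : IsPure Δ d)
    (j : ℕ) (hj : j ≤ d) :
    hNum Δ d (d - j) - hNum Δ d j
      = (-1 : ℤ) ^ j * ∑ F ∈ Δ, ((d - F.card).choose j : ℤ) * eps Δ d F := by
  have hcard : ∀ F ∈ Δ, F.card ≤ d := by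
    intro F hF
    obtain ⟨G, hG, hFG, hGc⟩ := hpure F hF
    calc F.card ≤ G.card := Finset.card_le_card hFG
    _ = d := hGc
  -- chi of link
  have hchi : ∀ F ∈ Δ, chi (link Δ F)
      = ∑ G ∈ Δ.filter (fun G => F ⊆ G), (-1:ℤ)^(G.card + F.card + 1) := by
    intro F hF
    rw [chi]
    apply Finset.sum_nbij' (fun G => F ∪ G) (fun G => G \ F)
    · intro G hG
      simp only [link, Finset.mem_filter] at hG
      simp [Finset.mem_filter, hG.2.2]
    · intro G hG
      simp only [Finset.mem_filter] at hG
      simp only [link, Finset.mem_filter]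
      refine ⟨hcx G hG.1 _ Finset.sdiff_subset, Finset.disjoint_sdiff, ?_⟩
      rw [Finset.union_sdiff_of_subset hG.2]
      exact hG.1
    · intro G hG
      simp only [link, Finset.mem_filter] at hG
      exact Finset.union_sdiff_cancel_left hG.2.1
    · intro G hG
      simp only [Finset.mem_filter] at hG
      exact Finset.union_sdiff_of_subset hG.2
    · intro G hG
      simp only [link, Finset.mem_filter] at hG
      rw [Finset.card_union_of_disjoint hG.2.1]
      exact negpow_congr _ _ (by omega)
  -- the main sum S
  have hS : ∑ F ∈ Δ, ((d - F.card).choose j : ℤ) * chi (link Δ F)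
      = ∑ i ∈ Finset.range (d+1), (fNum Δ i : ℤ) *
          ((-1:ℤ)^(i+1) * (if i ≤ j then ((d-i).choose (j-i) : ℤ) else 0)) := by
    calc ∑ F ∈ Δ, ((d - F.card).choose j : ℤ) * chi (link Δ F)
        = ∑ F ∈ Δ, ∑ G ∈ Δ.filter (fun G => F ⊆ G),
            ((d - F.card).choose j : ℤ) * (-1:ℤ)^(G.card + F.card + 1) := by
          apply Finset.sum_congr rfl
          intro F hF
          rw [hchi F hF, Finset.mul_sum]
      _ = ∑ G ∈ Δ, ∑ F ∈ Δ.filter (fun F => F ⊆ G),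
            ((d - F.card).choose j : ℤ) * (-1:ℤ)^(G.card + F.card + 1) := by
          apply Finset.sum_comm'
          intro F G
          simp only [Finset.mem_filter]
          tauto
      _ = ∑ G ∈ Δ, ∑ F ∈ G.powerset,
            ((d - F.card).choose j : ℤ) * (-1:ℤ)^(G.card + F.card + 1) := by
          apply Finset.sum_congr rfl
          intro G hG
          apply Finset.sum_congr _ (fun _ _ => rfl)
          ext F
          simp only [Finset.mem_filter, Finset.mem_powerset]
          exact ⟨fun h => h.2, fun h => ⟨hcx G hG F h, h⟩⟩
      _ = ∑ G ∈ Δ, ((-1:ℤ)^(G.card+1) *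
            (if G.card ≤ j then ((d-G.card).choose (j-G.card) : ℤ) else 0)) := by
          apply Finset.sum_congr rfl
          intro G hG
          rw [powsum G (fun k => ((d - k).choose j : ℤ) * (-1:ℤ)^(G.card + k + 1))]
          rw [← altsum j G.card d (hcard G hG), Finset.mul_sum]
          apply Finset.sum_congr rfl
          intro k hk
          rw [pow_add, pow_add]
          ring
      _ = _ := sumcard Δ d hcard (fun i => (-1:ℤ)^(i+1) *
            (if i ≤ j then ((d-i).choose (j-i) : ℤ) else 0))
  -- the correction sum T
  have hT : ∑ F ∈ Δ, ((d - F.card).choose j : ℤ) * (-1:ℤ)^(d + F.card + 1)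
      = ∑ i ∈ Finset.range (d+1), (fNum Δ i : ℤ) * (((d-i).choose j : ℤ) * (-1:ℤ)^(d+i+1)) :=
    sumcard Δ d hcard (fun i => ((d-i).choose j : ℤ) * (-1:ℤ)^(d+i+1))
  -- rewrite hNum j
  have hHj : hNum Δ d j = ∑ i ∈ Finset.range (d+1), (fNum Δ i : ℤ) *
      (if i ≤ j then (-1:ℤ)^(j+i) * ((d-i).choose (j-i) : ℤ) else 0) := by
    rw [hNum]
    rw [← Finset.sum_subset (Finset.range_subset_range.mpr (by omega : j + 1 ≤ d + 1))
      (by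
        intro i hi hni
        simp only [Finset.mem_range] at hi hni
        rw [if_neg (by omega)]
        ring)]
    apply Finset.sum_congr rfl
    intro i hi
    simp only [Finset.mem_range] at hi
    rw [if_pos (by omega)]
    rw [negpow_congr (j - i) (j + i) (by omega)]
    ring
  -- rewrite hNum (d - j)
  have hHdj : hNum Δ d (d - j) = ∑ i ∈ Finset.range (d+1), (fNum Δ i : ℤ) *
      ((-1:ℤ)^(d+j+i) * ((d-i).choose j : ℤ)) := by
    rw [hNum]
    rw [← Finset.sum_subset (Finset.range_subset_range.mpr (by omega : d - j + 1 ≤ d + 1))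
      (by
        intro i hi hni
        simp only [Finset.mem_range] at hi hni
        rw [Nat.choose_eq_zero_of_lt (by omega : d - i < j)]
        push_cast
        ring)]
    apply Finset.sum_congr rfl
    intro i hi
    simp only [Finset.mem_range] at hi
    have hsym : (d - i).choose (d - j - i) = (d - i).choose j := by
      have : d - j - i = (d - i) - j := by omega
      rw [this, Nat.choose_symm (by omega)]
    rw [hsym, negpow_congr (d - j - i) (d + j + i) (by omega)]
    ring
  -- put it together
  have hsplit : ∑ F ∈ Δ, ((d - F.card).choose j : ℤ) * eps Δ d F
      = (∑ F ∈ Δ, ((d - F.card).choose j : ℤ) * chi (link Δ F))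
        - ∑ F ∈ Δ, ((d - F.card).choose j : ℤ) * (-1:ℤ)^(d + F.card + 1) := by
    rw [← Finset.sum_sub_distrib]
    apply Finset.sum_congr rfl
    intro F hF
    rw [eps]
    ring
  rw [hsplit, hS, hT, hHj, hHdj, ← Finset.sum_sub_distrib, ← Finset.sum_sub_distrib,
    Finset.mul_sum]
  apply Finset.sum_congr rfl
  intro i hi
  by_cases hij : i ≤ j
  · rw [if_pos hij, if_pos hij]
    simp only [pow_add, pow_succ, pow_zero]
    ring
  · rw [if_neg hij, if_neg hij]
    simp only [pow_add, pow_succ, pow_zero]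
    ring
end

section
/- Let Δ be a pure (d-1)-dimensional semi-Eulerian simplicial complex, i.e., ε_Δ(F) = 0 for all nonempty faces F. Then for every j with 0 ≤ j ≤ d, h_{d-j}(Δ) - h_j(Δ) = (-1)^j binom(d,j) [χ̃(Δ) - (-1)^{d-1}] (Klee's semi-Eulerian relations). -/
open Finset

variable {V : Type*} [DecidableEq V]

/-- Auxiliary parity fact. -/
lemma aux_neg_one_pow_add_two_mul (a b : ℕ) : (-1:ℤ)^(a + 2*b) = (-1)^a := by
  rw [pow_add, pow_mul]; simp

/-- Auxiliary alternating Vandermonde-type identity. -/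
lemma aux_choose_alt (j : ℕ) : ∀ g d : ℕ, g ≤ d →
    ∑ k ∈ range (g+1), (-1:ℤ)^k * (g.choose k) * ((d-k).choose j)
      = if g ≤ j then (((d-g).choose (j-g) : ℕ) : ℤ) else 0 := by
  intro g
  induction g with
  | zero => intro d _; simp
  | succ g ih =>
    intro d hgd
    have hB := ih (d-1) (by omega)
    have hA := ih d (by omega)
    have step : ∑ k ∈ range (g+2), (-1:ℤ)^k * ((g+1).choose k) * ((d-k).choose j)
        = (∑ k ∈ range (g+1), (-1:ℤ)^k * (g.choose k) * ((d-k).choose j))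
          - ∑ k ∈ range (g+1), (-1:ℤ)^k * (g.choose k) * ((d-1-k).choose j) := by
      rw [Finset.sum_range_succ' (fun k => (-1:ℤ)^k * ((g+1).choose k) * ((d-k).choose j))]
      have hsplit : ∀ k ∈ range (g+1),
          (-1:ℤ)^(k+1) * ((g+1).choose (k+1)) * ((d-(k+1)).choose j)
            = (-((-1:ℤ)^k * (g.choose k) * ((d-1-k).choose j)))
              + ((-1:ℤ)^(k+1) * (g.choose (k+1)) * ((d-(k+1)).choose j)) := by
        intro k _
        have h1 : (g+1).choose (k+1) = g.choose k + g.choose (k+1) := Nat.choose_succ_succ' g k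
        have hd : d - (k+1) = d - 1 - k := by omega
        rw [h1, hd]
        push_cast
        ring
      rw [Finset.sum_congr rfl hsplit, Finset.sum_add_distrib]
      have h2 : ∑ k ∈ range (g+1), (-1:ℤ)^(k+1) * (g.choose (k+1)) * ((d-(k+1)).choose j)
          = (∑ k ∈ range (g+1), (-1:ℤ)^k * (g.choose k) * ((d-k).choose j))
            - ((d:ℕ).choose j : ℤ) := by
        rw [Finset.sum_range_succ, Nat.choose_succ_self]
        rw [Finset.sum_range_succ' (fun k => (-1:ℤ)^k * (g.choose k) * ((d-k).choose j))]
        simp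
      rw [h2, Finset.sum_neg_distrib]
      simp
      ring
    rw [step, hA, hB]
    by_cases h1 : g + 1 ≤ j
    · have h0 : g ≤ j := by omega
      rw [if_pos h0, if_pos h0, if_pos h1]
      have e1 : d - g = (d - g - 1) + 1 := by omega
      have e2 : j - g = (j - g - 1) + 1 := by omega
      have e3 : d - 1 - g = d - g - 1 := by omega
      have e4 : d - (g+1) = d - g - 1 := by omega
      have e5 : j - (g+1) = j - g - 1 := by omega
      rw [e3, e4, e5, e1, e2, Nat.choose_succ_succ']
      push_cast; ring
    · by_cases h0 : g ≤ j
      · have hgj : g = j := by omega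
        rw [if_pos h0, if_pos h0, if_neg h1]
        subst hgj
        simp
      · rw [if_neg h0, if_neg h0, if_neg h1]; ring

/-- The Euler characteristic of a link, expressed as a sum over faces containing `F`. -/
lemma aux_chi_link (Δ : Finset (Finset V)) (hcx : IsComplex Δ) (F : Finset V) :
    chi (link Δ F) = ∑ G ∈ Δ.filter (fun G => F ⊆ G), (-1:ℤ)^(G.card + F.card + 1) := by
  unfold chi
  apply Finset.sum_nbij' (fun H => F ∪ H) (fun G => G \ F)
  · intro H hH
    simp only [link, Finset.mem_filter] at hH ⊢
    exact ⟨hH.2.2, Finset.subset_union_left⟩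
  · intro G hG
    simp only [link, Finset.mem_filter] at hG ⊢
    refine ⟨hcx G hG.1 _ Finset.sdiff_subset, Finset.disjoint_sdiff, ?_⟩
    rw [Finset.union_sdiff_of_subset hG.2]
    exact hG.1
  · intro H hH
    simp only [link, Finset.mem_filter] at hH
    exact Finset.union_sdiff_cancel_left hH.2.1
  · intro G hG
    simp only [Finset.mem_filter] at hG
    exact Finset.union_sdiff_of_subset hG.2
  · intro H hH
    simp only [link, Finset.mem_filter] at hH
    rw [Finset.card_union_of_disjoint hH.2.1,
      show F.card + H.card + F.card + 1 = (H.card + 1) + 2 * F.card from by ring,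
      pow_add (-1:ℤ) (H.card + 1) (2 * F.card), pow_mul]
    simp

/-- Grouping a sum over faces by cardinality. -/
lemma aux_sum_card (Δ : Finset (Finset V)) (d : ℕ) (hcard : ∀ F ∈ Δ, F.card ≤ d)
    (c : ℕ → ℤ) :
    ∑ F ∈ Δ, c F.card = ∑ i ∈ range (d+1), c i * fNum Δ i := by
  rw [← Finset.sum_fiberwise_of_maps_to
    (g := Finset.card) (t := range (d+1))
    (fun F hF => mem_range.mpr (by have := hcard F hF; omega)) (fun F => c F.card)]
  apply Finset.sum_congr rfl
  intro i _
  have : ∑ F ∈ Δ.filter (fun F => F.card = i), c F.card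
      = ∑ F ∈ Δ.filter (fun F => F.card = i), c i :=
    Finset.sum_congr rfl (fun F hF => by rw [(Finset.mem_filter.mp hF).2])
  rw [this, Finset.sum_const, fNum, nsmul_eq_mul, mul_comm]

/-- Klee's semi-Eulerian relations: if `ε_Δ(F) = 0` for all nonempty faces,
then `h_{d-j}(Δ) - h_j(Δ) = (-1)^j C(d,j) [χ̃(Δ) - (-1)^{d-1}]`. -/
theorem klee_semi_eulerian (Δ : Finset (Finset V)) (d : ℕ)
    (hcx : IsComplex Δ) (hne : ∅ ∈ Δ) (hpure : IsPure Δ d)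
    (hsemi : ∀ F ∈ Δ, F ≠ ∅ → eps Δ d F = 0)
    (j : ℕ) (hj : j ≤ d) :
    hNum Δ d (d - j) - hNum Δ d j
      = (-1 : ℤ) ^ j * (d.choose j : ℤ) * (chi Δ - (-1 : ℤ) ^ (d + 1)) := by
  classical
  -- every face has at most d vertices
  have hcard : ∀ F ∈ Δ, F.card ≤ d := by
    intro F hF
    obtain ⟨G, hG, hFG, hGc⟩ := hpure F hF
    calc F.card ≤ G.card := Finset.card_le_card hFG
      _ = d := hGc
  -- semi-Eulerian consequence
  have key : ∀ F ∈ Δ, F ≠ ∅ →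
      ∑ G ∈ Δ.filter (fun G => F ⊆ G), (-1:ℤ)^G.card = (-1:ℤ)^d := by
    intro F hF hFne
    have h0 := hsemi F hF hFne
    unfold eps at h0
    rw [aux_chi_link Δ hcx F] at h0
    have hsum : ∑ G ∈ Δ.filter (fun G => F ⊆ G), (-1:ℤ)^(G.card + F.card + 1)
        = (-1:ℤ)^(d + F.card + 1) := by linarith
    have expand : ∀ G : Finset V,
        (-1:ℤ)^G.card = (-1:ℤ)^(F.card+1) * (-1:ℤ)^(G.card + F.card + 1) := by
      intro G
      rw [← pow_add, show F.card + 1 + (G.card + F.card + 1) = G.card + 2*(F.card+1) from by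
        ring, aux_neg_one_pow_add_two_mul]
    calc ∑ G ∈ Δ.filter (fun G => F ⊆ G), (-1:ℤ)^G.card
        = ∑ G ∈ Δ.filter (fun G => F ⊆ G), (-1:ℤ)^(F.card+1) * (-1:ℤ)^(G.card + F.card + 1) :=
          Finset.sum_congr rfl (fun G _ => expand G)
      _ = (-1:ℤ)^(F.card+1) * ∑ G ∈ Δ.filter (fun G => F ⊆ G), (-1:ℤ)^(G.card + F.card + 1) :=
          (Finset.mul_sum _ _ _).symm
      _ = (-1:ℤ)^(F.card+1) * (-1:ℤ)^(d + F.card + 1) := by rw [hsum]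
      _ = (-1:ℤ)^d := by
          rw [← pow_add, show F.card + 1 + (d + F.card + 1) = d + 2*(F.card+1) from by ring,
            aux_neg_one_pow_add_two_mul]
  -- abbreviations
  set C : ℤ := (d.choose j : ℤ) with hC
  -- the weighted double sum
  set w : Finset V → ℤ := fun F => (-1:ℤ)^F.card * (((d - F.card).choose j : ℕ) : ℤ) with hw
  set S : ℤ := ∑ F ∈ Δ.erase ∅, w F * ∑ G ∈ Δ.filter (fun G => F ⊆ G), (-1:ℤ)^G.card with hS
  -- T and U
  set T : ℤ := ∑ F ∈ Δ, (-1:ℤ)^F.card * (((d - F.card).choose j : ℕ) : ℤ) with hT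
  set U : ℤ := ∑ F ∈ Δ, (-1:ℤ)^F.card *
      (if F.card ≤ j then (((d - F.card).choose (j - F.card) : ℕ) : ℤ) else 0) with hU
  -- first evaluation of S
  have eval1 : S = (-1:ℤ)^d * (T - C) := by
    have : S = ∑ F ∈ Δ.erase ∅, w F * (-1:ℤ)^d := by
      apply Finset.sum_congr rfl
      intro F hF
      rw [key F (Finset.mem_of_mem_erase hF) (Finset.ne_of_mem_erase hF)]
    rw [this]
    have hsplit : (∑ F ∈ Δ.erase ∅, w F) + w ∅ = ∑ F ∈ Δ, w F :=
      Finset.sum_erase_add Δ w hne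
    have hwempty : w ∅ = C := by simp [hw, hC]
    have : ∑ F ∈ Δ.erase ∅, w F = T - C := by
      rw [← hwempty]
      have : ∑ F ∈ Δ, w F = T := rfl
      linarith [hsplit]
    rw [← Finset.sum_mul, this]
    ring
  -- second evaluation of S (swap order of summation)
  have eval2 : S = U + C * chi Δ := by
    have swap : S = ∑ G ∈ Δ, ∑ F ∈ (Δ.erase ∅).filter (fun F => F ⊆ G),
        w F * (-1:ℤ)^G.card := by
      rw [hS]
      have step1 : ∀ F ∈ Δ.erase ∅,
          w F * ∑ G ∈ Δ.filter (fun G => F ⊆ G), (-1:ℤ)^G.card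
            = ∑ G ∈ Δ, if F ⊆ G then w F * (-1:ℤ)^G.card else 0 := by
        intro F _
        rw [Finset.mul_sum, ← Finset.sum_filter]
      rw [Finset.sum_congr rfl step1, Finset.sum_comm]
      apply Finset.sum_congr rfl
      intro G _
      rw [Finset.sum_filter]
    have inner : ∀ G ∈ Δ, ∑ F ∈ (Δ.erase ∅).filter (fun F => F ⊆ G), w F
        = (if G.card ≤ j then (((d - G.card).choose (j - G.card) : ℕ) : ℤ) else 0) - C := by
      intro G hG
      have hset : (Δ.erase ∅).filter (fun F => F ⊆ G) = G.powerset.erase ∅ := by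
        ext F
        simp only [Finset.mem_filter, Finset.mem_erase, Finset.mem_powerset]
        constructor
        · rintro ⟨⟨h1, _⟩, h3⟩; exact ⟨h1, h3⟩
        · rintro ⟨h1, h2⟩; exact ⟨⟨h1, hcx G hG F h2⟩, h2⟩
      rw [hset]
      have hsplit : (∑ F ∈ G.powerset.erase ∅, w F) + w ∅ = ∑ F ∈ G.powerset, w F :=
        Finset.sum_erase_add G.powerset w (Finset.mem_powerset.mpr (Finset.empty_subset G))
      have hwempty : w ∅ = C := by simp [hw, hC]
      have hpows : ∑ F ∈ G.powerset, w F
          = if G.card ≤ j then (((d - G.card).choose (j - G.card) : ℕ) : ℤ) else 0 := by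
        rw [Finset.sum_powerset]
        have : ∀ k ∈ range (G.card + 1),
            ∑ t ∈ Finset.powersetCard k G, w t
              = (-1:ℤ)^k * (G.card.choose k) * (((d - k).choose j : ℕ) : ℤ) := by
          intro k _
          rw [show (fun t => w t) = (fun t => (fun m => (-1:ℤ)^m * (((d - m).choose j : ℕ) : ℤ)) t.card) from rfl]
          rw [Finset.sum_powersetCard k G (fun m => (-1:ℤ)^m * (((d - m).choose j : ℕ) : ℤ))]
          rw [nsmul_eq_mul]
          ring
        rw [Finset.sum_congr rfl this]
        exact aux_choose_alt j G.card d (hcard G hG)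
      have := hsplit
      rw [hwempty, hpows] at this
      linarith
    have chi_eq : ∑ G ∈ Δ, (-1:ℤ)^G.card = - chi Δ := by
      unfold chi
      rw [← Finset.sum_neg_distrib]
      apply Finset.sum_congr rfl
      intro G _
      rw [pow_succ]
      ring
    rw [swap]
    have : ∀ G ∈ Δ, ∑ F ∈ (Δ.erase ∅).filter (fun F => F ⊆ G), w F * (-1:ℤ)^G.card
        = ((if G.card ≤ j then (((d - G.card).choose (j - G.card) : ℕ) : ℤ) else 0) - C)
            * (-1:ℤ)^G.card := by
      intro G hG
      rw [← Finset.sum_mul, inner G hG]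
    rw [Finset.sum_congr rfl this]
    have expand : ∀ G : Finset V,
        ((if G.card ≤ j then (((d - G.card).choose (j - G.card) : ℕ) : ℤ) else 0) - C)
            * (-1:ℤ)^G.card
          = (-1:ℤ)^G.card *
              (if G.card ≤ j then (((d - G.card).choose (j - G.card) : ℕ) : ℤ) else 0)
            - C * (-1:ℤ)^G.card := by
      intro G; ring
    rw [Finset.sum_congr rfl (fun G _ => expand G), Finset.sum_sub_distrib,
      ← Finset.mul_sum, chi_eq]
    rw [hU]
    ring
  -- relate T to hNum Δ d (d - j)
  have hTval : hNum Δ d (d - j) = (-1:ℤ)^(d-j) * T := by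
    rw [hT, aux_sum_card Δ d hcard (fun i => (-1:ℤ)^i * (((d - i).choose j : ℕ) : ℤ))]
    rw [Finset.mul_sum]
    rw [hNum]
    rw [← Finset.sum_subset (Finset.range_subset_range.mpr (show d - j + 1 ≤ d + 1 by omega))
      (f := fun i => (-1:ℤ)^(d-j) * ((-1:ℤ)^i * (((d - i).choose j : ℕ) : ℤ) * (fNum Δ i : ℤ)))
      ?_]
    · apply Finset.sum_congr rfl
      intro i hi
      have hi' : i ≤ d - j := by have := Finset.mem_range.mp hi; omega
      have hch : (d - i).choose (d - j - i) = (d - i).choose j := by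
        have h1 : j ≤ d - i := by omega
        have h2 : (d - i) - j = d - j - i := by omega
        rw [← h2, Nat.choose_symm h1]
      have hsign : (-1:ℤ)^(d - j - i) = (-1:ℤ)^(d-j) * (-1:ℤ)^i := by
        rw [← pow_add, show d - j + i = (d - j - i) + 2*i from by omega,
          aux_neg_one_pow_add_two_mul]
      rw [hch, hsign]
      ring
    · intro i hi1 hi2
      simp only [Finset.mem_range] at hi1 hi2
      have hlt : d - i < j := by omega
      simp only [Nat.choose_eq_zero_of_lt hlt]
      simp
  -- relate U to hNum Δ d j
  have hUval : hNum Δ d j = (-1:ℤ)^j * U := by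
    rw [hU, aux_sum_card Δ d hcard
      (fun i => (-1:ℤ)^i * (if i ≤ j then (((d - i).choose (j - i) : ℕ) : ℤ) else 0))]
    rw [Finset.mul_sum]
    rw [hNum]
    rw [← Finset.sum_subset (Finset.range_subset_range.mpr (show j + 1 ≤ d + 1 by omega))
      (f := fun i => (-1:ℤ)^j * ((-1:ℤ)^i *
        (if i ≤ j then (((d - i).choose (j - i) : ℕ) : ℤ) else 0) * (fNum Δ i : ℤ)))
      ?_]
    · apply Finset.sum_congr rfl
      intro i hi
      have hi' : i ≤ j := by have := Finset.mem_range.mp hi; omega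
      rw [if_pos hi']
      have hsign : (-1:ℤ)^(j - i) = (-1:ℤ)^j * (-1:ℤ)^i := by
        rw [← pow_add, show j + i = (j - i) + 2*i from by omega,
          aux_neg_one_pow_add_two_mul]
      rw [hsign]
      ring
    · intro i hi1 hi2
      simp only [Finset.mem_range] at hi1 hi2
      have hgt : ¬ (i ≤ j) := by omega
      simp only [if_neg hgt]
      simp
  -- combine
  have hsq : (-1:ℤ)^j * (-1:ℤ)^j = 1 := by
    rw [← pow_add]
    exact Even.neg_one_pow ⟨j, rfl⟩
  have hddj : (-1:ℤ)^d * (-1:ℤ)^(d-j) = (-1:ℤ)^j := by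
    rw [← pow_add, show d + (d - j) = j + 2*(d - j) from by omega,
      aux_neg_one_pow_add_two_mul]
  have hTT : T = (-1:ℤ)^(d-j) * hNum Δ d (d - j) := by
    rw [hTval, ← mul_assoc]
    have : (-1:ℤ)^(d-j) * (-1:ℤ)^(d-j) = 1 := by
      rw [← pow_add]
      exact Even.neg_one_pow ⟨d - j, rfl⟩
    rw [this, one_mul]
  have hUU : U = (-1:ℤ)^j * hNum Δ d j := by
    rw [hUval, ← mul_assoc, hsq, one_mul]
  have main : (-1:ℤ)^j * hNum Δ d j + C * chi Δ
      = (-1:ℤ)^j * hNum Δ d (d - j) - (-1:ℤ)^d * C := by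
    have e : (-1:ℤ)^d * (T - C) = U + C * chi Δ := by rw [← eval1, ← eval2]
    rw [hTT, hUU] at e
    have e2 : (-1:ℤ)^d * ((-1:ℤ)^(d-j) * hNum Δ d (d - j)) = (-1:ℤ)^j * hNum Δ d (d - j) := by
      rw [← mul_assoc, hddj]
    rw [mul_sub] at e
    rw [e2] at e
    linarith
  have h1 : (-1:ℤ)^j * hNum Δ d (d - j)
      = (-1:ℤ)^j * hNum Δ d j + C * chi Δ + (-1:ℤ)^d * C := by linarith
  have goal' : hNum Δ d (d - j) = hNum Δ d j + (-1:ℤ)^j * C * (chi Δ + (-1:ℤ)^d) := by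
    calc hNum Δ d (d - j) = ((-1:ℤ)^j * (-1:ℤ)^j) * hNum Δ d (d - j) := by rw [hsq, one_mul]
      _ = (-1:ℤ)^j * ((-1:ℤ)^j * hNum Δ d (d - j)) := by ring
      _ = (-1:ℤ)^j * ((-1:ℤ)^j * hNum Δ d j + C * chi Δ + (-1:ℤ)^d * C) := by rw [h1]
      _ = ((-1:ℤ)^j * (-1:ℤ)^j) * hNum Δ d j + (-1:ℤ)^j * C * (chi Δ + (-1:ℤ)^d) := by ring
      _ = hNum Δ d j + (-1:ℤ)^j * C * (chi Δ + (-1:ℤ)^d) := by rw [hsq, one_mul]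
  rw [goal', pow_succ]
  ring
end

section
/- Let Δ be a pure (d-1)-dimensional Eulerian simplicial complex, i.e., ε_Δ(F) = 0 for all faces F including the empty face. Then h_j(Δ) = h_{d-j}(Δ) for all 0 ≤ j ≤ d (the classical Dehn–Sommerville relations). -/
open Finset

variable {V : Type*} [DecidableEq V]

/- ### Auxiliary lemmas -/

lemma DS_aux_T (k d j : ℕ) :
    ∑ i ∈ Finset.range (k+1), (-1:ℤ)^i * (k.choose (i+1)) * ((d-(i+1)).choose j)
    = (d.choose j : ℤ) - ∑ i ∈ Finset.range (k+1), (-1:ℤ)^i * (k.choose i) * ((d-i).choose j) := by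
  rw [Finset.sum_range_succ'
    (f := fun i => (-1:ℤ)^i * (k.choose i) * ((d-i).choose j))]
  rw [Finset.sum_range_succ
    (f := fun i => (-1:ℤ)^i * (k.choose (i+1)) * ((d-(i+1)).choose j))]
  simp [Nat.choose_succ_self, pow_succ]

lemma DS_key_identity : ∀ (k d j : ℕ), k ≤ d → j ≤ d →
    ∑ i ∈ Finset.range (k+1), (-1:ℤ)^i * (k.choose i) * ((d-i).choose j)
      = ((d-k).choose (d-j) : ℤ) := by
  intro k
  induction k with
  | zero =>
    intro d j _ hj
    have h := Nat.choose_symm hj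
    simp [h]
  | succ k ih =>
    intro d j hk hj
    rcases Nat.lt_or_ge j d with hjd | hge
    · -- j < d
      rw [Finset.sum_range_succ']
      have hstep : ∀ i ∈ Finset.range (k+1),
          (-1:ℤ)^(i+1) * (((k+1).choose (i+1) : ℕ)) * (((d-(i+1)).choose j : ℕ))
          = -((-1:ℤ)^i * (k.choose i) * (((d-1)-i).choose j))
            - (-1:ℤ)^i * (k.choose (i+1)) * ((d-(i+1)).choose j) := by
        intro i _
        have h1 : (d:ℕ) - (i+1) = (d-1) - i := by omega
        rw [Nat.choose_succ_succ, h1]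
        push_cast
        ring
      rw [Finset.sum_congr rfl hstep]
      have hA : ∑ i ∈ Finset.range (k+1),
          (-1:ℤ)^i * (k.choose i) * (((d-1)-i).choose j)
          = (((d-1)-k).choose ((d-1)-j) : ℤ) := ih (d-1) j (by omega) (by omega)
      have hB : ∑ i ∈ Finset.range (k+1),
          (-1:ℤ)^i * (k.choose (i+1)) * ((d-(i+1)).choose j)
          = (d.choose j : ℤ) - ((d-k).choose (d-j) : ℤ) := by
        rw [DS_aux_T, ih d j (by omega) hj]
      have hgoal : ∑ i ∈ Finset.range (k+1),
          (-((-1:ℤ)^i * (k.choose i) * (((d-1)-i).choose j))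
            - (-1:ℤ)^i * (k.choose (i+1)) * ((d-(i+1)).choose j))
          = -(((d-1)-k).choose ((d-1)-j) : ℤ)
            - ((d.choose j : ℤ) - ((d-k).choose (d-j) : ℤ)) := by
        rw [Finset.sum_sub_distrib, ← hA, ← hB, Finset.sum_neg_distrib]
      rw [hgoal]
      have e1 : d - k = ((d-1)-k)+1 := by omega
      have e2 : d - j = ((d-1)-j)+1 := by omega
      have e3 : d - (k+1) = (d-1)-k := by omega
      have pascal : (d-k).choose (d-j)
          = ((d-1)-k).choose ((d-1)-j) + ((d-1)-k).choose (d-j) := by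
        rw [e1, e2, Nat.choose_succ_succ]
      rw [e3, pascal]
      simp only [Nat.choose_zero_right, Nat.sub_zero, Nat.cast_one, pow_zero, one_mul]
      push_cast
      ring
    · -- j = d
      have hjd : j = d := le_antisymm hj hge
      subst hjd
      rw [Finset.sum_range_succ']
      have h0 : ∑ i ∈ Finset.range (k+1),
          (-1:ℤ)^(i+1) * ((k+1).choose (i+1)) * ((j-(i+1)).choose j) = 0 := by
        apply Finset.sum_eq_zero
        intro i _
        have hlt : j - (i+1) < j := by omega
        rw [Nat.choose_eq_zero_of_lt hlt]
        simp
      rw [h0]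
      simp

lemma DS_pow_parity (m n : ℕ) (h : m % 2 = n % 2) : (-1:ℤ)^m = (-1:ℤ)^n := by
  rcases Nat.even_or_odd m with hm | hm
  · have hn : Even n := Nat.even_iff.mpr (by have := Nat.even_iff.mp hm; omega)
    rw [hm.neg_one_pow, hn.neg_one_pow]
  · have hn : Odd n := Nat.odd_iff.mpr (by have := Nat.odd_iff.mp hm; omega)
    rw [hm.neg_one_pow, hn.neg_one_pow]

lemma DS_sum_supsets (Δ : Finset (Finset V)) (d : ℕ) (hcx : IsComplex Δ)
    (F : Finset V) (hF : F ∈ Δ) (heps : eps Δ d F = 0) :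
    ∑ H ∈ Δ.filter (fun H => F ⊆ H), (-1:ℤ)^H.card = (-1:ℤ)^d := by
  have hchi : chi (link Δ F) = (-1:ℤ)^(d + F.card + 1) := by
    have h := heps
    unfold eps at h
    linarith
  have hbij : ∑ H ∈ Δ.filter (fun H => F ⊆ H), (-1:ℤ)^H.card
      = ∑ G ∈ link Δ F, (-1:ℤ)^(F.card + G.card) := by
    refine Finset.sum_nbij' (fun H => H \ F) (fun G => F ∪ G) ?_ ?_ ?_ ?_ ?_
    · intro H hH
      rw [Finset.mem_filter] at hH
      obtain ⟨hHΔ, hFH⟩ := hH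
      rw [link, Finset.mem_filter]
      refine ⟨hcx H hHΔ _ Finset.sdiff_subset, Finset.disjoint_sdiff, ?_⟩
      rw [Finset.union_sdiff_of_subset hFH]
      exact hHΔ
    · intro G hG
      rw [link, Finset.mem_filter] at hG
      rw [Finset.mem_filter]
      exact ⟨hG.2.2, Finset.subset_union_left⟩
    · intro H hH
      rw [Finset.mem_filter] at hH
      exact Finset.union_sdiff_of_subset hH.2
    · intro G hG
      rw [link, Finset.mem_filter] at hG
      exact Finset.union_sdiff_cancel_left hG.2.1
    · intro H hH
      rw [Finset.mem_filter] at hH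
      show (-1:ℤ)^H.card = (-1:ℤ)^(F.card + (H \ F).card)
      congr 1
      have h := Finset.card_sdiff_add_card_eq_card hH.2
      omega
  rw [hbij]
  have h1 : ∑ G ∈ link Δ F, (-1:ℤ)^(F.card + G.card)
      = (-1:ℤ)^F.card * ∑ G ∈ link Δ F, (-1:ℤ)^(G.card) := by
    rw [Finset.mul_sum]
    exact Finset.sum_congr rfl fun G _ => pow_add _ _ _
  have h2 : ∑ G ∈ link Δ F, (-1:ℤ)^G.card = -chi (link Δ F) := by
    rw [chi, ← Finset.sum_neg_distrib]
    apply Finset.sum_congr rfl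
    intro G _
    rw [pow_succ]
    ring
  rw [h1, h2, hchi]
  have hsq : (-1:ℤ)^F.card * (-1:ℤ)^F.card = 1 := by
    rw [← pow_add]
    exact Even.neg_one_pow ⟨F.card, rfl⟩
  rw [pow_succ, pow_add]
  linear_combination ((-1:ℤ)^d) * hsq

lemma DS_sum_choose (Δ : Finset (Finset V)) (d : ℕ) (hcx : IsComplex Δ)
    (hEul : ∀ F ∈ Δ, eps Δ d F = 0) (i : ℕ) :
    ∑ H ∈ Δ, (-1:ℤ)^H.card * (H.card.choose i : ℤ) = (-1:ℤ)^d * (fNum Δ i : ℤ) := by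
  have hfe : ∀ H ∈ Δ, (Δ.filter (fun F => F.card = i)).filter (fun F => F ⊆ H)
      = Finset.powersetCard i H := by
    intro H hH
    ext F
    simp only [Finset.mem_filter, Finset.mem_powersetCard]
    constructor
    · rintro ⟨⟨_, hc⟩, hs⟩; exact ⟨hs, hc⟩
    · rintro ⟨hs, hc⟩; exact ⟨⟨hcx H hH F hs, hc⟩, hs⟩
  have h1 : (-1:ℤ)^d * (fNum Δ i : ℤ)
      = ∑ F ∈ Δ.filter (fun F => F.card = i),
          ∑ H ∈ Δ.filter (fun H => F ⊆ H), (-1:ℤ)^H.card := by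
    rw [Finset.sum_congr rfl (fun F hF => DS_sum_supsets Δ d hcx F
      (Finset.mem_filter.mp hF).1 (hEul F (Finset.mem_filter.mp hF).1))]
    rw [Finset.sum_const, nsmul_eq_mul, fNum, mul_comm]
  rw [h1]
  have h2 : ∀ F ∈ Δ.filter (fun F => F.card = i),
      ∑ H ∈ Δ.filter (fun H => F ⊆ H), (-1:ℤ)^H.card
      = ∑ H ∈ Δ, if F ⊆ H then (-1:ℤ)^H.card else 0 :=
    fun F _ => Finset.sum_filter _ _
  rw [Finset.sum_congr rfl h2, Finset.sum_comm]
  symm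
  apply Finset.sum_congr rfl
  intro H hH
  rw [← Finset.sum_filter, hfe H hH, Finset.sum_const, Finset.card_powersetCard,
    nsmul_eq_mul, mul_comm]

lemma DS_sum_card_group (Δ : Finset (Finset V)) (d : ℕ)
    (hd : ∀ H ∈ Δ, H.card ≤ d) (g : ℕ → ℤ) :
    ∑ H ∈ Δ, g H.card = ∑ k ∈ Finset.range (d+1), (fNum Δ k : ℤ) * g k := by
  rw [← Finset.sum_fiberwise_of_maps_to (s := Δ) (g := fun H => H.card) (t := Finset.range (d+1))
      (fun H hH => Finset.mem_range.mpr (show H.card < d + 1 by have := hd H hH; omega)) (fun H => g H.card)]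
  apply Finset.sum_congr rfl
  intro k _
  rw [Finset.sum_congr rfl (fun H hH => by rw [(Finset.mem_filter.mp hH).2]),
    Finset.sum_const, nsmul_eq_mul, fNum]

lemma DS_star (Δ : Finset (Finset V)) (d : ℕ) (hcx : IsComplex Δ)
    (hd : ∀ H ∈ Δ, H.card ≤ d) (hEul : ∀ F ∈ Δ, eps Δ d F = 0) (i : ℕ) :
    ∑ k ∈ Finset.range (d+1), (fNum Δ k : ℤ) * ((-1:ℤ)^k * (k.choose i : ℤ))
      = (-1:ℤ)^d * (fNum Δ i : ℤ) := by
  rw [← DS_sum_card_group Δ d hd (fun k => (-1:ℤ)^k * (k.choose i : ℤ))]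
  exact DS_sum_choose Δ d hcx hEul i

lemma DS_hNum_eq (Δ : Finset (Finset V)) (d j : ℕ) (hj : j ≤ d) :
    hNum Δ d j = ∑ k ∈ Finset.range (d+1),
      (-1:ℤ)^(j+k) * (((d-k).choose (d-j) : ℕ) : ℤ) * (fNum Δ k : ℤ) := by
  rw [hNum]
  have hcongr : ∀ i ∈ Finset.range (j+1),
      (-1:ℤ)^(j-i) * (((d-i).choose (j-i) : ℕ) : ℤ) * (fNum Δ i : ℤ)
      = (-1:ℤ)^(j+i) * (((d-i).choose (d-j) : ℕ) : ℤ) * (fNum Δ i : ℤ) := by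
    intro i hi
    have hij : i ≤ j := by
      have := Finset.mem_range.mp hi; omega
    have hsign : (-1:ℤ)^(j-i) = (-1:ℤ)^(j+i) :=
      DS_pow_parity _ _ (by omega)
    have hch : (d-i).choose (j-i) = (d-i).choose (d-j) := by
      have h1 : (d-i) - (j-i) = d - j := by omega
      rw [← h1, Nat.choose_symm (by omega : j - i ≤ d - i)]
    rw [hsign, hch]
  rw [Finset.sum_congr rfl hcongr]
  apply Finset.sum_subset (Finset.range_subset_range.mpr (by omega : j + 1 ≤ d + 1))
  intro k hk hk2
  have hjk : j < k := by
    have h1 := Finset.mem_range.mp hk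
    have h2 : ¬ k < j + 1 := fun h => hk2 (Finset.mem_range.mpr h)
    omega
  have hlt : d - k < d - j := by
    have := Finset.mem_range.mp hk; omega
  rw [Nat.choose_eq_zero_of_lt hlt]
  simp

/-- classical Dehn–Sommerville relations: if `Δ` is Eulerian
(`ε_Δ(F) = 0` for all faces, including the empty face), then `h_j(Δ) = h_{d-j}(Δ)`. -/
theorem classical_dehn_sommerville (Δ : Finset (Finset V)) (d : ℕ)
    (hcx : IsComplex Δ) (hne : ∅ ∈ Δ) (hpure : IsPure Δ d)
    (hEul : ∀ F ∈ Δ, eps Δ d F = 0)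
    (j : ℕ) (hj : j ≤ d) :
    hNum Δ d j = hNum Δ d (d - j) := by
  have hcard : ∀ H ∈ Δ, H.card ≤ d := by
    intro H hH
    obtain ⟨G, hG, hHG, hGc⟩ := hpure H hH
    calc H.card ≤ G.card := Finset.card_le_card hHG
    _ = d := hGc
  rw [DS_hNum_eq Δ d j hj, DS_hNum_eq Δ d (d-j) (Nat.sub_le d j)]
  have hdd : d - (d - j) = j := by omega
  rw [hdd]
  have key' : ∀ k ∈ Finset.range (d+1), (((d-k).choose (d-j) : ℕ) : ℤ)
      = ∑ i ∈ Finset.range (d+1), (-1:ℤ)^i * (k.choose i : ℤ) * (((d-i).choose j : ℕ) : ℤ) := by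
    intro k hk
    have hkd : k ≤ d := by have := Finset.mem_range.mp hk; omega
    rw [← DS_key_identity k d j hkd hj]
    apply Finset.sum_subset (Finset.range_subset_range.mpr (by omega : k + 1 ≤ d + 1))
    intro i _ hi2
    have hki : k < i := by
      have h2 : ¬ i < k + 1 := fun h => hi2 (Finset.mem_range.mpr h)
      omega
    rw [Nat.choose_eq_zero_of_lt hki]
    simp
  calc ∑ k ∈ Finset.range (d+1), (-1:ℤ)^(j+k) * (((d-k).choose (d-j) : ℕ) : ℤ) * (fNum Δ k : ℤ)
      = ∑ k ∈ Finset.range (d+1), ∑ i ∈ Finset.range (d+1),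
          (-1:ℤ)^(j+k) * ((-1:ℤ)^i * (k.choose i : ℤ) * (((d-i).choose j : ℕ) : ℤ)) * (fNum Δ k : ℤ) := by
        apply Finset.sum_congr rfl
        intro k hk
        rw [key' k hk, Finset.mul_sum, Finset.sum_mul]
    _ = ∑ i ∈ Finset.range (d+1), ∑ k ∈ Finset.range (d+1),
          (-1:ℤ)^(j+k) * ((-1:ℤ)^i * (k.choose i : ℤ) * (((d-i).choose j : ℕ) : ℤ)) * (fNum Δ k : ℤ) :=
        Finset.sum_comm
    _ = ∑ i ∈ Finset.range (d+1), (-1:ℤ)^(d-j+i) * (((d-i).choose j : ℕ) : ℤ) * (fNum Δ i : ℤ) := by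
        apply Finset.sum_congr rfl
        intro i _
        have hinner : ∑ k ∈ Finset.range (d+1),
            (-1:ℤ)^(j+k) * ((-1:ℤ)^i * (k.choose i : ℤ) * (((d-i).choose j : ℕ) : ℤ)) * (fNum Δ k : ℤ)
            = (-1:ℤ)^(j+i) * (((d-i).choose j : ℕ) : ℤ)
              * ∑ k ∈ Finset.range (d+1), (fNum Δ k : ℤ) * ((-1:ℤ)^k * (k.choose i : ℤ)) := by
          rw [Finset.mul_sum]
          apply Finset.sum_congr rfl
          intro k _
          rw [pow_add, pow_add]
          ring
        rw [hinner, DS_star Δ d hcx hcard hEul i]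
        have hs : (-1:ℤ)^(d-j+i) = (-1:ℤ)^(j+i) * (-1:ℤ)^d := by
          rw [← pow_add]
          exact DS_pow_parity _ _ (by omega)
        rw [hs]
        ring
end

section
/- Let Δ be a pure (d-1)-dimensional simplicial complex with d ≥ 2. Then the short h-numbers h*_i(Δ) := ∑_{v ∈ V(Δ)} h_i(lk_Δ v) satisfy h*_{i-1}(Δ) = i·h_i(Δ) + (d-i+1)·h_{i-1}(Δ) for all 1 ≤ i ≤ d. -/
/-!
Counting pairs `(v, F)` with `v ∈ F` gives `∑_v f_{k-1}(lk v) = (k+1) f_k(Δ)`, so the short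
`h`-numbers are the `h`-numbers (for dimension `d`) of the weighted `f`-vector `k ↦ k f_{k-1}(Δ)`.
Writing `k = i - (i - k)`, the identity `C(n, m+1) (m+1) = C(n, m) (n-m)` splits this termwise
into `i h_i + (d-i+1) h_{i-1}`.
-/

open Finset

variable {V : Type*} [DecidableEq V]

def hTransform (d : ℕ) (f : ℕ → ℤ) (j : ℕ) : ℤ :=
  ∑ k ∈ range (j + 1), (-1 : ℤ) ^ (j - k) * ((d - k).choose (j - k)) * f k

lemma hNum_eq_hTransform {W : Type*} (Δ : Finset (Finset W)) (d j : ℕ) :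
    hNum Δ d j = hTransform d (fun k => fNum Δ k) j := rfl

lemma choose_mul_sub_eq {d j k : ℕ} (hkj : k ≤ j) (hjd : j ≤ d) :
    ((d - k).choose (j + 1 - k) : ℤ) * ((j : ℤ) + 1 - k)
      = ((d - k).choose (j - k) : ℤ) * ((d : ℤ) - j) := by
  have h := Nat.choose_succ_right_eq (d - k) (j - k)
  rw [show j - k + 1 = j + 1 - k by omega, show d - k - (j - k) = d - j by omega] at h
  have := congrArg (fun n : ℕ => (n : ℤ)) h
  push_cast [hkj, hjd, show k ≤ j + 1 by omega] at this
  linear_combination this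

lemma hTransform_id_mul (f : ℕ → ℤ) {d j : ℕ} (hjd : j ≤ d) :
    hTransform d (fun k => k * f k) (j + 1)
      = (j + 1) * hTransform d f (j + 1) + ((d : ℤ) - j) * hTransform d f j := by
  unfold hTransform
  rw [sum_range_succ _ (j + 1), sum_range_succ _ (j + 1), mul_add, mul_sum, mul_sum, add_right_comm,
    ← sum_add_distrib]
  congr 1
  · refine sum_congr rfl fun k hk => ?_
    have hkj : k ≤ j := Nat.lt_succ_iff.mp (mem_range.mp hk)
    have hsign : (-1 : ℤ) ^ (j + 1 - k) = -(-1) ^ (j - k) := by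
      rw [Nat.sub_add_comm hkj, pow_succ, mul_neg_one]
    rw [hsign]
    linear_combination (-1 : ℤ) ^ (j - k) * f k * choose_mul_sub_eq hkj hjd
  · simp

lemma fNum_link_singleton {Δ : Finset (Finset V)} (hcx : IsComplex Δ) (v : V) (k : ℕ) :
    fNum (link Δ {v}) k = #{F ∈ Δ | F.card = k + 1 ∧ v ∈ F} := by
  refine card_nbij' (insert v) (fun F => F.erase v) ?_ ?_ ?_ ?_
  · intro G hG
    simp only [coe_filter, link, mem_filter, Set.mem_ofPred_eq, disjoint_singleton_left] at hG ⊢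
    obtain ⟨⟨-, hvG, hunion⟩, hcard⟩ := hG
    refine ⟨by rwa [insert_eq], ?_, mem_insert_self v G⟩
    rw [card_insert_of_notMem hvG, hcard]
  · intro F hF
    simp only [coe_filter, link, mem_filter, Set.mem_ofPred_eq, disjoint_singleton_left] at hF ⊢
    obtain ⟨hF, hcard, hvF⟩ := hF
    refine ⟨⟨hcx F hF _ (erase_subset v F), notMem_erase v F, ?_⟩, ?_⟩
    · rwa [← insert_eq, insert_erase hvF]
    · rw [card_erase_of_mem hvF, hcard, Nat.add_sub_cancel]
  · intro G hG
    simp only [coe_filter, link, mem_filter, Set.mem_ofPred_eq, disjoint_singleton_left] at hG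
    exact erase_insert hG.1.2.1
  · intro F hF
    simp only [coe_filter, Set.mem_ofPred_eq] at hF
    exact insert_erase hF.2.2

/-- Each face with `k + 1` vertices lies in the links of exactly `k + 1` vertices. -/
lemma sum_fNum_link [Fintype V] {Δ : Finset (Finset V)} (hcx : IsComplex Δ) (k : ℕ) :
    ∑ v ∈ univ.filter (fun v : V => ({v} : Finset V) ∈ Δ), fNum (link Δ {v}) k
      = (k + 1) * fNum Δ (k + 1) := by
  rw [fNum]
  set vertices := univ.filter (fun v : V => ({v} : Finset V) ∈ Δ)
  set faces := Δ.filter (fun F => F.card = k + 1)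
  have hcount := sum_card_bipartiteAbove_eq_sum_card_bipartiteBelow
    (s := vertices) (t := faces) (r := fun v F => v ∈ F)
  have hbelow : ∀ F ∈ faces, #(vertices.bipartiteBelow (fun v F => v ∈ F) F) = k + 1 := by
    intro F hF
    rw [mem_filter] at hF
    rw [bipartiteBelow, ← hF.2]
    congr 1
    ext v
    simp only [vertices, mem_filter, mem_univ, true_and, and_iff_right_iff_imp]
    exact fun hv => hcx F hF.1 _ (singleton_subset_iff.mpr hv)
  rw [sum_congr rfl hbelow, sum_const, smul_eq_mul, mul_comm] at hcount
  rw [← hcount]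
  refine sum_congr rfl fun v _ => ?_
  rw [fNum_link_singleton hcx, bipartiteAbove, filter_filter]

lemma sum_hNum_link [Fintype V] {Δ : Finset (Finset V)} (hcx : IsComplex Δ) (d j : ℕ) :
    ∑ v ∈ univ.filter (fun v : V => ({v} : Finset V) ∈ Δ), hNum (link Δ {v}) (d - 1) j
      = hTransform d (fun k => k * fNum Δ k) (j + 1) := by
  simp only [hNum, hTransform]
  rw [sum_comm, sum_range_succ' _ (j + 1)]
  simp only [Nat.cast_zero, zero_mul, mul_zero, add_zero]
  refine sum_congr rfl fun k _ => ?_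
  rw [← mul_sum, ← Nat.cast_sum, sum_fNum_link hcx,
    show j + 1 - (k + 1) = j - k by omega, show d - 1 - k = d - (k + 1) by omega]
  push_cast
  ring

theorem short_h_relation_general [Fintype V] (Δ : Finset (Finset V)) (d : ℕ)
    (hcx : IsComplex Δ)
    (i : ℕ) (h1 : 1 ≤ i) (h2 : i ≤ d) :
    ∑ v ∈ Finset.univ.filter (fun v : V => ({v} : Finset V) ∈ Δ),
        hNum (link Δ {v}) (d - 1) (i - 1)
      = (i : ℤ) * hNum Δ d i + ((d : ℤ) - i + 1) * hNum Δ d (i - 1) := by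
  obtain ⟨j, rfl⟩ := Nat.exists_eq_add_of_le' h1
  rw [Nat.add_sub_cancel, sum_hNum_link hcx, hTransform_id_mul _ (by omega),
    hNum_eq_hTransform, hNum_eq_hTransform]
  push_cast
  ring

/-- the short `h`-numbers `h*_i(Δ) = ∑_{v ∈ V(Δ)} h_i(lk_Δ v)` satisfy
`h*_{i-1} = i·h_i + (d-i+1)·h_{i-1}` for `1 ≤ i ≤ d`. -/
theorem short_h_relation [Fintype V] (Δ : Finset (Finset V)) (d : ℕ)
    (hcx : IsComplex Δ) (hne : ∅ ∈ Δ) (hpure : IsPure Δ d) (hd : 2 ≤ d)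
    (i : ℕ) (h1 : 1 ≤ i) (h2 : i ≤ d) :
    ∑ v ∈ Finset.univ.filter (fun v : V => ({v} : Finset V) ∈ Δ),
        hNum (link Δ {v}) (d - 1) (i - 1)
      = (i : ℤ) * hNum Δ d i + ((d : ℤ) - i + 1) * hNum Δ d (i - 1) :=
  short_h_relation_general Δ d hcx i h1 h2
end

section
/- Let Δ be a (d-1)-dimensional balanced simplicial complex with coloring κ: V(Δ) → [d], let S ⊆ [d] and i ∉ S. Then ∑_{v : κ(v) = i} h_S(lk_Δ v) = h_{S ∪ {i}}(Δ) + h_S(Δ). -/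
open Finset

variable {V : Type*} [DecidableEq V]

variable {d : ℕ}

/-- `Δ` is balanced with respect to the coloring `κ`: no two distinct vertices of a face
share a color. -/
def IsBalanced (Δ : Finset (Finset V)) (κ : V → Fin d) : Prop :=
  ∀ F ∈ Δ, ∀ x ∈ F, ∀ y ∈ F, κ x = κ y → x = y

/-- The flag `f`-number: the number of faces with color set exactly `S`. -/
def flagF (Δ : Finset (Finset V)) (κ : V → Fin d) (S : Finset (Fin d)) : ℕ :=
  (Δ.filter fun F => F.image κ = S).card

/-- The flag `h`-number: `h_T = ∑_{S ⊆ T} (-1)^{|T|-|S|} f_S`. -/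
def flagH (Δ : Finset (Finset V)) (κ : V → Fin d) (T : Finset (Fin d)) : ℤ :=
  ∑ S ∈ T.powerset, (-1 : ℤ) ^ (T.card - S.card) * flagF Δ κ S


lemma short_flag_key [Fintype V] (Δ : Finset (Finset V)) (κ : V → Fin d)
    (hcx : IsComplex Δ) (hbal : IsBalanced Δ κ) (i : Fin d)
    (R : Finset (Fin d)) (hiR : i ∉ R) :
    ∑ v ∈ Finset.univ.filter (fun v : V => ({v} : Finset V) ∈ Δ ∧ κ v = i),
        flagF (link Δ {v}) κ R = flagF Δ κ (insert i R) := by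
  classical
  simp only [flagF]
  rw [← Finset.card_sigma]
  apply Finset.card_bij (fun x _ => insert x.1 x.2)
  · rintro ⟨v, G⟩ hx
    simp only [link, Finset.mem_sigma, Finset.mem_filter] at hx
    obtain ⟨⟨-, hv, hκ⟩, ⟨hG, hdisj, hun⟩, him⟩ := hx
    rw [Finset.mem_filter]
    constructor
    · rwa [Finset.insert_eq]
    · rw [Finset.image_insert, him, hκ]
  · rintro ⟨v, G⟩ hx ⟨w, H⟩ hy h
    simp only [link, Finset.mem_sigma, Finset.mem_filter] at hx hy
    obtain ⟨⟨-, hv, hκv⟩, ⟨hG, hdG, -⟩, himG⟩ := hx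
    obtain ⟨⟨-, hw, hκw⟩, ⟨hH, hdH, -⟩, himH⟩ := hy
    rw [Finset.disjoint_singleton_left] at hdG hdH
    simp only at h
    have hvw : v = w := by
      have hv' : v ∈ insert w H := h ▸ Finset.mem_insert_self v G
      rcases Finset.mem_insert.mp hv' with h1 | h1
      · exact h1
      · exact absurd (himH ▸ Finset.mem_image_of_mem κ h1) (hκv ▸ hiR)
    subst hvw
    have hGH : G = H := by
      have := congrArg (fun s => Finset.erase s v) h
      simpa [Finset.erase_insert hdG, Finset.erase_insert hdH] using this
    subst hGH
    rfl
  · intro F hF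
    rw [Finset.mem_filter] at hF
    obtain ⟨hFΔ, him⟩ := hF
    have hiF : i ∈ F.image κ := him ▸ Finset.mem_insert_self i R
    obtain ⟨v, hvF, hκv⟩ := Finset.mem_image.mp hiF
    have himage : (F.erase v).image κ = R := by
      apply Finset.Subset.antisymm
      · intro j hj
        obtain ⟨x, hx, hκx⟩ := Finset.mem_image.mp hj
        have hxF := Finset.mem_of_mem_erase hx
        have hjiR : j ∈ insert i R := him ▸ hκx ▸ Finset.mem_image_of_mem κ hxF
        rcases Finset.mem_insert.mp hjiR with h1 | h1
        · exact absurd (hbal F hFΔ x hxF v hvF (by rw [hκx, hκv, h1]))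
            (Finset.ne_of_mem_erase hx)
        · exact h1
      · intro j hj
        have : j ∈ F.image κ := him ▸ Finset.mem_insert_of_mem hj
        obtain ⟨x, hxF, hκx⟩ := Finset.mem_image.mp this
        have hxv : x ≠ v := by
          rintro rfl
          have hij : i = j := by rw [← hκv, hκx]
          exact hiR (hij ▸ hj)
        exact Finset.mem_image.mpr ⟨x, Finset.mem_erase.mpr ⟨hxv, hxF⟩, hκx⟩
    refine ⟨⟨v, F.erase v⟩, ?_, ?_⟩
    · simp only [link, Finset.mem_sigma, Finset.mem_filter]
      refine ⟨⟨Finset.mem_univ v, hcx F hFΔ _ (Finset.singleton_subset_iff.mpr hvF), hκv⟩,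
        ⟨hcx F hFΔ _ (Finset.erase_subset _ _), ?_, ?_⟩, himage⟩
      · simp
      · rwa [← Finset.insert_eq, Finset.insert_erase hvF]
    · simp [Finset.insert_erase hvF]

/-- for a balanced `(d-1)`-dimensional complex, `S ⊆ [d]` and a color `i ∉ S`,
`∑_{κ(v)=i} h_S(lk_Δ v) = h_{S∪{i}}(Δ) + h_S(Δ)`. -/
theorem short_flag_h [Fintype V] (Δ : Finset (Finset V)) (κ : V → Fin d)
    (hcx : IsComplex Δ) (hne : ∅ ∈ Δ) (hpure : IsPure Δ d) (hbal : IsBalanced Δ κ)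
    (S : Finset (Fin d)) (i : Fin d) (hi : i ∉ S) :
    ∑ v ∈ Finset.univ.filter (fun v : V => ({v} : Finset V) ∈ Δ ∧ κ v = i),
        flagH (link Δ {v}) κ S
      = flagH Δ κ (insert i S) + flagH Δ κ S := by
  classical
  have hLHS : ∑ v ∈ Finset.univ.filter (fun v : V => ({v} : Finset V) ∈ Δ ∧ κ v = i),
      flagH (link Δ {v}) κ S
      = ∑ R ∈ S.powerset, (-1 : ℤ) ^ (S.card - R.card) * flagF Δ κ (insert i R) := by
    simp only [flagH]
    rw [Finset.sum_comm]
    refine Finset.sum_congr rfl fun R hR => ?_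
    have hiR : i ∉ R := fun h => hi (Finset.mem_powerset.mp hR h)
    rw [← Finset.mul_sum, ← short_flag_key Δ κ hcx hbal i R hiR, Nat.cast_sum]
  rw [hLHS]
  have hdisj : Disjoint S.powerset (S.powerset.image (insert i)) := by
    rw [Finset.disjoint_right]
    intro Q hQ1 hQ2
    obtain ⟨R, -, rfl⟩ := Finset.mem_image.mp hQ1
    exact hi (Finset.mem_powerset.mp hQ2 (Finset.mem_insert_self i R))
  have hinj : ∀ R ∈ S.powerset, ∀ R' ∈ S.powerset, insert i R = insert i R' → R = R' := by
    intro R hR R' hR' h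
    have h1 : i ∉ R := fun h => hi (Finset.mem_powerset.mp hR h)
    have h2 : i ∉ R' := fun h => hi (Finset.mem_powerset.mp hR' h)
    have := congrArg (fun s => Finset.erase s i) h
    simpa [Finset.erase_insert h1, Finset.erase_insert h2] using this
  have hcard : (insert i S).card = S.card + 1 := Finset.card_insert_of_notMem hi
  have hsplit : flagH Δ κ (insert i S)
      = (∑ Q ∈ S.powerset, -((-1 : ℤ) ^ (S.card - Q.card) * flagF Δ κ Q))
        + ∑ R ∈ S.powerset, (-1 : ℤ) ^ (S.card - R.card) * flagF Δ κ (insert i R) := by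
    rw [flagH, Finset.powerset_insert, Finset.sum_union hdisj, Finset.sum_image hinj]
    congr 1
    · refine Finset.sum_congr rfl fun Q hQ => ?_
      have hQS : Q.card ≤ S.card := Finset.card_le_card (Finset.mem_powerset.mp hQ)
      have : (insert i S).card - Q.card = (S.card - Q.card) + 1 := by omega
      rw [this, pow_succ]
      ring
    · refine Finset.sum_congr rfl fun R hR => ?_
      have h1 : i ∉ R := fun h => hi (Finset.mem_powerset.mp hR h)
      rw [Finset.card_insert_of_notMem h1, hcard]
      congr 2
      omega
  rw [hsplit, flagH, Finset.sum_neg_distrib]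
  ring
end

section
/- Let Δ be a (d-1)-dimensional balanced simplicial complex with coloring κ: V(Δ) → [d], and let S ⊆ [d]. Then h_S(Δ) - h_{[d]∖S}(Δ) = (-1)^{d-|S|} ∑_{F ∈ Δ_S} ε_Δ(F), where Δ_S = {F ∈ Δ : κ(F) ⊆ S} and ε_Δ(F) = χ̃(lk_Δ F) - (-1)^{d-1-|F|}. -/
open Finset

variable {V : Type*} [DecidableEq V]

variable {d : ℕ}

section Aux
variable {d : ℕ}

lemma card_image_kappa (Δ : Finset (Finset V)) (κ : V → Fin d)
    (hbal : IsBalanced Δ κ) {F : Finset V} (hF : F ∈ Δ) :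
    (F.image κ).card = F.card :=
  Finset.card_image_of_injOn (fun x hx y hy h => hbal F hF x hx y hy h)

lemma neg_one_pow_sdiff {H F : Finset V} (hFH : F ⊆ H) :
    (-1 : ℤ) ^ ((H \ F).card + 1) = (-1 : ℤ) ^ (H.card + 1) * (-1 : ℤ) ^ F.card := by
  have hc : (H \ F).card + 1 + 2 * F.card = H.card + 1 + F.card := by
    have := Finset.card_sdiff_of_subset hFH
    have := Finset.card_le_card hFH
    omega
  calc (-1 : ℤ) ^ ((H \ F).card + 1)
      = (-1 : ℤ) ^ ((H \ F).card + 1) * ((-1 : ℤ) ^ 2) ^ F.card := by norm_num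
    _ = (-1 : ℤ) ^ ((H \ F).card + 1 + 2 * F.card) := by rw [← pow_mul, ← pow_add]
    _ = (-1 : ℤ) ^ (H.card + 1 + F.card) := by rw [hc]
    _ = (-1 : ℤ) ^ (H.card + 1) * (-1 : ℤ) ^ F.card := by rw [pow_add]

/-- `flagH T` equals `(-1)^{|T|+1}` times the Euler characteristic of the rank-selected
subcomplex. -/
lemma flagH_eq_chi (Δ : Finset (Finset V)) (κ : V → Fin d)
    (hbal : IsBalanced Δ κ) (T : Finset (Fin d)) :
    flagH Δ κ T = (-1 : ℤ) ^ (T.card + 1) * chi (Δ.filter fun F => F.image κ ⊆ T) := by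
  have key : chi (Δ.filter fun F => F.image κ ⊆ T)
      = ∑ A ∈ T.powerset, (-1 : ℤ) ^ (A.card + 1) * flagF Δ κ A := by
    have hf := Finset.sum_fiberwise_of_maps_to (s := Δ.filter fun F => F.image κ ⊆ T)
      (t := T.powerset) (g := fun F => F.image κ)
      (f := fun F => (-1 : ℤ) ^ (F.card + 1))
      (fun F hF => Finset.mem_powerset.2 (Finset.mem_filter.1 hF).2)
    rw [chi, ← hf]
    refine Finset.sum_congr rfl fun A hA => ?_
    have hfib : (Δ.filter fun F => F.image κ ⊆ T).filter (fun F => F.image κ = A)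
        = Δ.filter fun F => F.image κ = A := by
      rw [Finset.filter_filter]
      refine Finset.filter_congr fun F _ => ?_
      constructor
      · exact fun h => h.2
      · exact fun h => ⟨h ▸ Finset.mem_powerset.1 hA, h⟩
    rw [hfib]
    calc ∑ F ∈ Δ.filter (fun F => F.image κ = A), (-1 : ℤ) ^ (F.card + 1)
        = ∑ _F ∈ Δ.filter (fun F => F.image κ = A), (-1 : ℤ) ^ (A.card + 1) := by
          refine Finset.sum_congr rfl fun F hF => ?_
          obtain ⟨hFΔ, him⟩ := Finset.mem_filter.1 hF
          rw [show F.card = A.card from by rw [← him, card_image_kappa Δ κ hbal hFΔ]]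
      _ = (-1 : ℤ) ^ (A.card + 1) * flagF Δ κ A := by
          rw [Finset.sum_const, flagF]; push_cast; ring
  rw [key, flagH, Finset.mul_sum]
  refine Finset.sum_congr rfl fun A hA => ?_
  have hle : A.card ≤ T.card := Finset.card_le_card (Finset.mem_powerset.1 hA)
  obtain ⟨k, hk⟩ : ∃ k, T.card = A.card + k := ⟨T.card - A.card, by omega⟩
  have : T.card - A.card = k := by omega
  rw [this, hk, ← mul_assoc, ← pow_add,
    show A.card + k + 1 + (A.card + 1) = 2 * (A.card + 1) + k from by ring, pow_add, pow_mul]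
  norm_num

lemma chi_link_eq (Δ : Finset (Finset V)) (hcx : IsComplex Δ) (F : Finset V) :
    chi (link Δ F) = ∑ H ∈ Δ.filter (fun H => F ⊆ H), (-1 : ℤ) ^ ((H \ F).card + 1) := by
  rw [chi, link]
  refine Finset.sum_nbij' (fun G => F ∪ G) (fun H => H \ F) ?_ ?_ ?_ ?_ ?_
  · intro G hG
    obtain ⟨-, -, hFG⟩ := Finset.mem_filter.1 hG
    exact Finset.mem_filter.2 ⟨hFG, Finset.subset_union_left⟩
  · intro H hH
    obtain ⟨hHΔ, hFH⟩ := Finset.mem_filter.1 hH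
    refine Finset.mem_filter.2 ⟨hcx H hHΔ _ Finset.sdiff_subset, Finset.disjoint_sdiff, ?_⟩
    rwa [Finset.union_sdiff_of_subset hFH]
  · intro G hG
    obtain ⟨-, hdisj, -⟩ := Finset.mem_filter.1 hG
    exact Finset.union_sdiff_cancel_left hdisj
  · intro H hH
    exact Finset.union_sdiff_of_subset (Finset.mem_filter.1 hH).2
  · intro G hG
    obtain ⟨-, hdisj, -⟩ := Finset.mem_filter.1 hG
    rw [Finset.union_sdiff_cancel_left hdisj]

lemma sum_chi_link (Δ : Finset (Finset V)) (κ : V → Fin d) (hcx : IsComplex Δ)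
    (S : Finset (Fin d)) :
    ∑ F ∈ Δ.filter (fun F => F.image κ ⊆ S), chi (link Δ F)
      = chi (Δ.filter fun H => H.image κ ⊆ Sᶜ) := by
  calc ∑ F ∈ Δ.filter (fun F => F.image κ ⊆ S), chi (link Δ F)
      = ∑ F ∈ Δ.filter (fun F => F.image κ ⊆ S),
          ∑ H ∈ Δ.filter (fun H => F ⊆ H), (-1 : ℤ) ^ ((H \ F).card + 1) :=
        Finset.sum_congr rfl fun F _ => chi_link_eq Δ hcx F
    _ = ∑ H ∈ Δ, ∑ F ∈ (H.filter fun v => κ v ∈ S).powerset,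
          (-1 : ℤ) ^ ((H \ F).card + 1) := by
        refine Finset.sum_comm' (fun F H => ?_)
        simp only [Finset.mem_filter, Finset.mem_powerset]
        constructor
        · rintro ⟨⟨hFΔ, hκF⟩, hHΔ, hFH⟩
          exact ⟨fun v hv => Finset.mem_filter.2
            ⟨hFH hv, hκF (Finset.mem_image_of_mem κ hv)⟩, hHΔ⟩
        · rintro ⟨hsub, hHΔ⟩
          have hFH : F ⊆ H := hsub.trans (Finset.filter_subset _ _)
          refine ⟨⟨hcx H hHΔ F hFH, ?_⟩, hHΔ, hFH⟩
          intro c hc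
          obtain ⟨v, hv, rfl⟩ := Finset.mem_image.1 hc
          exact (Finset.mem_filter.1 (hsub hv)).2
    _ = ∑ H ∈ Δ, (if H.image κ ⊆ Sᶜ then (-1 : ℤ) ^ (H.card + 1) else 0) := by
        refine Finset.sum_congr rfl fun H hH => ?_
        have : ∀ F ∈ (H.filter fun v => κ v ∈ S).powerset,
            (-1 : ℤ) ^ ((H \ F).card + 1) = (-1 : ℤ) ^ (H.card + 1) * (-1 : ℤ) ^ F.card := by
          intro F hF
          exact neg_one_pow_sdiff ((Finset.mem_powerset.1 hF).trans (Finset.filter_subset _ _))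
        rw [Finset.sum_congr rfl this, ← Finset.mul_sum, Finset.sum_powerset_neg_one_pow_card]
        have hiff : (H.filter fun v => κ v ∈ S) = ∅ ↔ H.image κ ⊆ Sᶜ := by
          rw [Finset.filter_eq_empty_iff]
          constructor
          · intro h c hc
            obtain ⟨v, hv, rfl⟩ := Finset.mem_image.1 hc
            simpa using h hv
          · intro h v hv
            have := h (Finset.mem_image_of_mem κ hv)
            simpa using this
        by_cases hc : H.image κ ⊆ Sᶜ
        · rw [if_pos (hiff.2 hc), if_pos hc]; ring
        · rw [if_neg (fun h => hc (hiff.1 h)), if_neg hc]; ring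
    _ = chi (Δ.filter fun H => H.image κ ⊆ Sᶜ) := by
        rw [chi, Finset.sum_filter]

end Aux

/-- flag Dehn–Sommerville relations for balanced complexes:
`h_S(Δ) - h_{[d]∖S}(Δ) = (-1)^{d-|S|} ∑_{F ∈ Δ_S} ε_Δ(F)`. -/
theorem flag_dehn_sommerville (Δ : Finset (Finset V)) (κ : V → Fin d)
    (hcx : IsComplex Δ) (hne : ∅ ∈ Δ) (hpure : IsPure Δ d) (hbal : IsBalanced Δ κ)
    (S : Finset (Fin d)) :
    flagH Δ κ S - flagH Δ κ Sᶜ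
      = (-1 : ℤ) ^ (d - S.card) * ∑ F ∈ Δ.filter (fun F => F.image κ ⊆ S), eps Δ d F := by
  have hle : S.card ≤ d := by simpa using Finset.card_le_univ S
  have hSc : Sᶜ.card = d - S.card := by
    rw [Finset.card_compl, Fintype.card_fin]
  have hsum : ∑ F ∈ Δ.filter (fun F => F.image κ ⊆ S), eps Δ d F
      = chi (Δ.filter fun H => H.image κ ⊆ Sᶜ)
        - (-1 : ℤ) ^ d * chi (Δ.filter fun F => F.image κ ⊆ S) := by
    unfold eps
    rw [Finset.sum_sub_distrib, sum_chi_link Δ κ hcx S]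
    congr 1
    rw [chi, Finset.mul_sum]
    exact Finset.sum_congr rfl fun F _ => by rw [← pow_add, Nat.add_assoc]
  rw [hsum, flagH_eq_chi Δ κ hbal S, flagH_eq_chi Δ κ hbal Sᶜ, hSc]
  set X := chi (Δ.filter fun F => F.image κ ⊆ S) with hX
  set Y := chi (Δ.filter fun H => H.image κ ⊆ Sᶜ) with hY
  have h1 : ((-1 : ℤ)) ^ (d - S.card) * (-1 : ℤ) ^ S.card = (-1 : ℤ) ^ d := by
    rw [← pow_add]; congr 1; omega
  have hbb : ((-1 : ℤ)) ^ (d - S.card) * (-1 : ℤ) ^ (d - S.card) = 1 := by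
    rw [← pow_add, show d - S.card + (d - S.card) = 2 * (d - S.card) from by ring, pow_mul]
    norm_num
  rw [pow_succ, pow_succ]
  linear_combination (-(X * ((-1 : ℤ) ^ (d - S.card)))) * h1
    + (X * ((-1 : ℤ) ^ S.card)) * hbb
end

section
/- Let Δ be a (d-1)-dimensional balanced Eulerian simplicial complex (i.e., ε_Δ(F) = 0 for all F ∈ Δ). Then h_S(Δ) = h_{[d]∖S}(Δ) for all S ⊆ [d] (the Bayer–Billera flag Dehn–Sommerville relations). -/
open Finset

variable {V : Type*} [DecidableEq V]

variable {d : ℕ}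

private lemma negpow_eq {m n : ℕ} (h : m % 2 = n % 2) : (-1 : ℤ) ^ m = (-1) ^ n := by
  rcases Nat.even_or_odd m with hm | hm
  · rw [hm.neg_one_pow, (Nat.even_iff.mpr (by rw [← h]; exact Nat.even_iff.mp hm)).neg_one_pow]
  · rw [hm.neg_one_pow, (Nat.odd_iff.mpr (by rw [← h]; exact Nat.odd_iff.mp hm)).neg_one_pow]
private lemma neg_one_pow_sub' {a s : ℕ} (h : a ≤ s) :
    (-1 : ℤ) ^ (s - a) = (-1) ^ s * (-1) ^ a := by
  have h1 : ((-1 : ℤ)) ^ a * (-1) ^ a = 1 := by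
    rw [← pow_add, ← two_mul, pow_mul]; norm_num
  calc (-1 : ℤ) ^ (s - a) = (-1) ^ (s - a) * ((-1) ^ a * (-1) ^ a) := by rw [h1, mul_one]
    _ = (-1) ^ (s - a + a) * (-1) ^ a := by rw [← mul_assoc, ← pow_add]
    _ = (-1) ^ s * (-1) ^ a := by rw [Nat.sub_add_cancel h]

private lemma sum_by_image {V : Type*} [DecidableEq V] {d : ℕ}
    (s : Finset (Finset V)) (κ : V → Fin d) (g : Finset (Fin d) → ℤ) :
    ∑ H ∈ s, g (H.image κ) =
      ∑ U : Finset (Fin d), g U * ((s.filter fun H => H.image κ = U).card : ℤ) := by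
  rw [← Finset.sum_fiberwise' s (fun H => H.image κ) g]
  exact Finset.sum_congr rfl fun U _ => by rw [Finset.sum_const, nsmul_eq_mul, mul_comm]
section key
variable {V : Type*} [DecidableEq V] {d : ℕ}

private lemma keyA (Δ : Finset (Finset V)) (κ : V → Fin d)
    (hcx : IsComplex Δ) (hbal : IsBalanced Δ κ)
    (hEul : ∀ F ∈ Δ, eps Δ d F = 0) (T : Finset (Fin d)) :
    ∑ U ∈ Finset.univ.filter (fun U => T ⊆ U), (-1 : ℤ) ^ U.card * flagF Δ κ U
      = (-1) ^ d * flagF Δ κ T := by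
  classical
  set s2 : Finset (Finset V) := Δ.filter (fun H => T ⊆ H.image κ) with hs2
  -- fact: for H ∈ s2, the two filters split H
  have hsplit : ∀ F ∈ Δ.filter (fun F => F.image κ = T), ∀ G ∈ link Δ F,
      (F ∪ G).filter (fun x => κ x ∈ T) = F ∧ (F ∪ G).filter (fun x => κ x ∉ T) = G := by
    intro F hF G hG
    rw [Finset.mem_filter] at hF
    rw [link, Finset.mem_filter] at hG
    obtain ⟨hFΔ, hFT⟩ := hF
    obtain ⟨hGΔ, hdisj, hUΔ⟩ := hG
    have hinj := hbal _ hUΔ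
    have hmemF : ∀ x ∈ G, κ x ∉ T := by
      intro x hx hxT
      rw [← hFT, Finset.mem_image] at hxT
      obtain ⟨y, hy, hyx⟩ := hxT
      have : y = x := hinj y (Finset.mem_union_left _ hy) x (Finset.mem_union_right _ hx) hyx
      exact (Finset.disjoint_left.mp hdisj (this ▸ hy)) hx
    constructor
    · ext x
      simp only [Finset.mem_filter, Finset.mem_union]
      constructor
      · rintro ⟨hx | hx, hxT⟩
        · exact hx
        · exact absurd hxT (hmemF x hx)
      · intro hx
        exact ⟨Or.inl hx, hFT ▸ Finset.mem_image_of_mem κ hx⟩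
    · ext x
      simp only [Finset.mem_filter, Finset.mem_union]
      constructor
      · rintro ⟨hx | hx, hxT⟩
        · exact absurd (hFT ▸ Finset.mem_image_of_mem κ hx) hxT
        · exact hx
      · intro hx
        exact ⟨Or.inr hx, hmemF x hx⟩
  -- bijection step
  have hB : ∑ F ∈ Δ.filter (fun F => F.image κ = T), chi (link Δ F)
      = ∑ H ∈ s2, (-1 : ℤ) ^ ((H.filter fun x => κ x ∉ T).card + 1) := by
    simp only [chi]
    rw [Finset.sum_sigma' (Δ.filter fun F => F.image κ = T) (fun F => link Δ F)
      (fun _ G => (-1 : ℤ) ^ (G.card + 1))]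
    refine Finset.sum_nbij' (fun p => p.1 ∪ p.2)
      (fun H => ⟨H.filter (fun x => κ x ∈ T), H.filter (fun x => κ x ∉ T)⟩)
      ?_ ?_ ?_ ?_ ?_
    · rintro ⟨F, G⟩ hp
      rw [Finset.mem_sigma] at hp
      obtain ⟨hF, hG⟩ := hp
      have hF' := Finset.mem_filter.mp hF
      have hG' : G ∈ Δ ∧ Disjoint F G ∧ F ∪ G ∈ Δ := by
        simpa [link, Finset.mem_filter] using hG
      rw [hs2, Finset.mem_filter]
      refine ⟨hG'.2.2, ?_⟩
      rw [Finset.image_union]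
      exact hF'.2 ▸ Finset.subset_union_left
    · intro H hH
      rw [hs2, Finset.mem_filter] at hH
      obtain ⟨hHΔ, hTH⟩ := hH
      have hFΔ : H.filter (fun x => κ x ∈ T) ∈ Δ := hcx H hHΔ _ (Finset.filter_subset _ _)
      have hGΔ : H.filter (fun x => κ x ∉ T) ∈ Δ := hcx H hHΔ _ (Finset.filter_subset _ _)
      have himg : (H.filter (fun x => κ x ∈ T)).image κ = T := by
        ext c
        simp only [Finset.mem_image, Finset.mem_filter]
        constructor
        · rintro ⟨x, ⟨_, hxT⟩, rfl⟩; exact hxT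
        · intro hc
          obtain ⟨x, hx, rfl⟩ := Finset.mem_image.mp (hTH hc)
          exact ⟨x, ⟨hx, hc⟩, rfl⟩
      rw [Finset.mem_sigma]
      refine ⟨Finset.mem_filter.mpr ⟨hFΔ, himg⟩, ?_⟩
      rw [link, Finset.mem_filter]
      refine ⟨hGΔ, Finset.disjoint_filter_filter_not _ _ _, ?_⟩
      rw [Finset.filter_union_filter_not_eq]
      exact hHΔ
    · rintro ⟨F, G⟩ hp
      rw [Finset.mem_sigma] at hp
      obtain ⟨h1, h2⟩ := hsplit F hp.1 G hp.2
      simp only [h1, h2]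
    · intro H hH
      exact Finset.filter_union_filter_not_eq _ H
    · rintro ⟨F, G⟩ hp
      rw [Finset.mem_sigma] at hp
      obtain ⟨_, h2⟩ := hsplit F hp.1 G hp.2
      simp only [h2]
  -- card relation
  have hC : ∀ H ∈ s2, (H.filter fun x => κ x ∉ T).card + T.card = (H.image κ).card := by
    intro H hH
    rw [hs2, Finset.mem_filter] at hH
    obtain ⟨hHΔ, hTH⟩ := hH
    have hinj : Set.InjOn κ (H.filter fun x => κ x ∉ T) := by
      intro x hx y hy hxy
      exact hbal H hHΔ x (Finset.filter_subset _ _ hx) y (Finset.filter_subset _ _ hy) hxy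
    have himg : (H.filter (fun x => κ x ∉ T)).image κ = (H.image κ) \ T := by
      ext c
      simp only [Finset.mem_image, Finset.mem_filter, Finset.mem_sdiff]
      constructor
      · rintro ⟨x, ⟨hx, hxT⟩, rfl⟩; exact ⟨⟨x, hx, rfl⟩, hxT⟩
      · rintro ⟨⟨x, hx, rfl⟩, hcT⟩; exact ⟨x, ⟨hx, hcT⟩, rfl⟩
    rw [← Finset.card_image_of_injOn hinj, himg]
    exact Finset.card_sdiff_add_card_eq_card hTH
  -- LHS equals sum over s2 of (-1)^(image card)
  have hA : ∑ U ∈ Finset.univ.filter (fun U => T ⊆ U), (-1 : ℤ) ^ U.card * flagF Δ κ U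
      = ∑ H ∈ s2, (-1 : ℤ) ^ (H.image κ).card := by
    have h0 := sum_by_image Δ κ (fun U => if T ⊆ U then (-1 : ℤ) ^ U.card else 0)
    rw [hs2, Finset.sum_filter, Finset.sum_filter, h0]
    refine Finset.sum_congr rfl fun U _ => ?_
    by_cases h : T ⊆ U <;> simp [h, flagF]
  -- sign manipulation on the s2 sum
  have hD : ∑ H ∈ s2, (-1 : ℤ) ^ ((H.filter fun x => κ x ∉ T).card + 1)
      = (-1 : ℤ) ^ (T.card + 1) * ∑ H ∈ s2, (-1 : ℤ) ^ (H.image κ).card := by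
    rw [Finset.mul_sum]
    refine Finset.sum_congr rfl fun H hH => ?_
    have hc := hC H hH
    rw [← pow_add]
    exact negpow_eq (by omega)
  -- Eulerian evaluation
  have hE : ∑ F ∈ Δ.filter (fun F => F.image κ = T), chi (link Δ F)
      = (-1 : ℤ) ^ (d + T.card + 1) * flagF Δ κ T := by
    rw [Finset.sum_congr rfl (fun F hF => ?_), Finset.sum_const, flagF,
      nsmul_eq_mul, mul_comm]
    rw [Finset.mem_filter] at hF
    have h0 := hEul F hF.1
    rw [eps, sub_eq_zero] at h0
    rw [h0]
    congr 2
    have : Set.InjOn κ F := fun x hx y hy hxy => hbal F hF.1 x hx y hy hxy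
    rw [← hF.2, Finset.card_image_of_injOn this]
  -- combine
  have key : (-1 : ℤ) ^ (T.card + 1) *
      (∑ U ∈ Finset.univ.filter (fun U => T ⊆ U), (-1 : ℤ) ^ U.card * flagF Δ κ U)
      = (-1 : ℤ) ^ (d + T.card + 1) * flagF Δ κ T := by
    rw [hA, ← hD, ← hB, hE]
  have hsq : ((-1 : ℤ) ^ (T.card + 1)) * ((-1 : ℤ) ^ (T.card + 1)) = 1 := by
    rw [← pow_add, ← two_mul, pow_mul]; norm_num
  calc ∑ U ∈ Finset.univ.filter (fun U => T ⊆ U), (-1 : ℤ) ^ U.card * flagF Δ κ U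
      = ((-1 : ℤ) ^ (T.card + 1) * (-1) ^ (T.card + 1)) *
        ∑ U ∈ Finset.univ.filter (fun U => T ⊆ U), (-1 : ℤ) ^ U.card * flagF Δ κ U := by
        rw [hsq, one_mul]
    _ = (-1 : ℤ) ^ (T.card + 1) * ((-1 : ℤ) ^ (d + T.card + 1) * flagF Δ κ T) := by
        rw [mul_assoc, key]
    _ = (-1 : ℤ) ^ d * flagF Δ κ T := by
        rw [← mul_assoc, ← pow_add,
          negpow_eq (m := T.card + 1 + (d + T.card + 1)) (n := d) (by omega)]

end key
/-- Bayer–Billera flag Dehn–Sommerville relations: if `Δ` is a balanced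
Eulerian complex, then `h_S(Δ) = h_{[d]∖S}(Δ)` for all `S ⊆ [d]`. -/
theorem bayer_billera (Δ : Finset (Finset V)) (κ : V → Fin d)
    (hcx : IsComplex Δ) (hne : ∅ ∈ Δ) (hpure : IsPure Δ d) (hbal : IsBalanced Δ κ)
    (hEul : ∀ F ∈ Δ, eps Δ d F = 0)
    (S : Finset (Fin d)) :
    flagH Δ κ S = flagH Δ κ Sᶜ := by
  classical
  have keyA' : ∀ T : Finset (Fin d), (flagF Δ κ T : ℤ)
      = (-1 : ℤ) ^ d *
        ∑ U ∈ Finset.univ.filter (fun U => T ⊆ U), (-1 : ℤ) ^ U.card * flagF Δ κ U := by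
    intro T
    rw [keyA Δ κ hcx hbal hEul T, ← mul_assoc, ← pow_add, ← two_mul, pow_mul]
    norm_num
  have hform : ∀ W : Finset (Fin d), flagH Δ κ W
      = (-1 : ℤ) ^ W.card * ∑ A ∈ W.powerset, (-1 : ℤ) ^ A.card * flagF Δ κ A := by
    intro W
    rw [flagH, Finset.mul_sum]
    refine Finset.sum_congr rfl fun A hA => ?_
    rw [neg_one_pow_sub' (Finset.card_le_card (Finset.mem_powerset.mp hA)), mul_assoc]
  have main : ∑ A ∈ S.powerset, (-1 : ℤ) ^ A.card * flagF Δ κ A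
      = (-1 : ℤ) ^ d * ∑ U ∈ Sᶜ.powerset, (-1 : ℤ) ^ U.card * flagF Δ κ U := by
    calc ∑ A ∈ S.powerset, (-1 : ℤ) ^ A.card * flagF Δ κ A
        = ∑ A ∈ S.powerset, (-1 : ℤ) ^ A.card * ((-1 : ℤ) ^ d *
            ∑ U ∈ Finset.univ.filter (fun U => A ⊆ U), (-1 : ℤ) ^ U.card * flagF Δ κ U) := by
          refine Finset.sum_congr rfl fun A _ => ?_
          rw [← keyA']
      _ = (-1 : ℤ) ^ d * ∑ A ∈ S.powerset, ∑ U : Finset (Fin d),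
            (if A ⊆ U then (-1 : ℤ) ^ A.card * ((-1 : ℤ) ^ U.card * flagF Δ κ U) else 0) := by
          rw [Finset.mul_sum]
          refine Finset.sum_congr rfl fun A _ => ?_
          have h1 : ∑ U : Finset (Fin d),
              (if A ⊆ U then (-1 : ℤ) ^ A.card * ((-1 : ℤ) ^ U.card * flagF Δ κ U) else 0)
              = (-1 : ℤ) ^ A.card *
                ∑ U ∈ Finset.univ.filter (fun U => A ⊆ U), (-1 : ℤ) ^ U.card * flagF Δ κ U := by
            rw [Finset.mul_sum, Finset.sum_filter]
          rw [h1]; ring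
      _ = (-1 : ℤ) ^ d * ∑ U : Finset (Fin d), ∑ A ∈ S.powerset,
            (if A ⊆ U then (-1 : ℤ) ^ A.card * ((-1 : ℤ) ^ U.card * flagF Δ κ U) else 0) := by
          rw [Finset.sum_comm]
      _ = (-1 : ℤ) ^ d * ∑ U : Finset (Fin d),
            (if S ∩ U = ∅ then (-1 : ℤ) ^ U.card * flagF Δ κ U else 0) := by
          congr 1
          refine Finset.sum_congr rfl fun U _ => ?_
          have hps : S.powerset.filter (fun A => A ⊆ U) = (S ∩ U).powerset := by
            ext A
            simp only [Finset.mem_filter, Finset.mem_powerset, Finset.subset_inter_iff]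
          rw [← Finset.sum_filter, hps, ← Finset.sum_mul,
            Finset.sum_powerset_neg_one_pow_card]
          split_ifs <;> simp
      _ = (-1 : ℤ) ^ d * ∑ U ∈ Sᶜ.powerset, (-1 : ℤ) ^ U.card * flagF Δ κ U := by
          congr 1
          rw [← Finset.sum_filter]
          congr 1
          ext U
          simp only [Finset.mem_filter, Finset.mem_univ, true_and, Finset.mem_powerset,
            Finset.eq_empty_iff_forall_notMem, Finset.mem_inter, Finset.subset_iff,
            Finset.mem_compl]
          tauto
  rw [hform S, hform Sᶜ, main, ← mul_assoc, ← pow_add,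
    negpow_eq (m := S.card + d) (n := Sᶜ.card)
      (by have := Finset.card_add_card_compl S; rw [Fintype.card_fin] at this; omega)]
end

section
/- Let P be a finite graded poset of rank d+1. Then P is j-Sing if and only if for every chain C = {0̂ = t_0 < t_1 < ... < t_{i-1} < t_i = 1̂} in P with i > j+1, one has μ_P(0̂,t_1)·μ_P(t_1,t_2)⋯μ_P(t_{i-1},1̂) = (-1)^{d+1}. -/
/-! A chain `0̂ = t₀ < ⋯ < tᵢ = 1̂` with `i > j + 1` links has every link of rank length at most
`d - j`, so if `P` is `j`-Sing each factor `μ(t_k, t_{k+1})` equals `(-1)^(length)` and the product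
telescopes to `(-1)^(d+1)`. Conversely, pad a short interval `[a, b]` by saturated chains
`0̂ ⋖ ⋯ ⋖ a` and `b ⋖ ⋯ ⋖ 1̂`: as `μ = -1` on covers, the product along this chain is
`±μ(a, b)`, and the chain has enough links for the hypothesis to pin `μ(a, b)` down. Both directions
rest on reading `JSing n` on `[s, t]` as "every subinterval of corank at least `n` is Eulerian",
which holds because in a graded poset every proper subinterval lies in one of corank one. -/

open Finset

variable {α : Type*} [Fintype α] [PartialOrder α] [BoundedOrder α] [DecidableEq α]
  [DecidableRel ((· ≤ ·) : α → α → Prop)]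

/-- `ρ` is a rank function making `α` a graded poset of rank `d + 1`. -/
def IsGraded (ρ : α → ℕ) (d : ℕ) : Prop :=
  ρ ⊥ = 0 ∧ ρ ⊤ = d + 1 ∧ (∀ a b : α, a ⋖ b → ρ b = ρ a + 1) ∧
    ∀ a b : α, a < b → ρ a < ρ b

/-- `mu` is the Möbius function of the poset `α`. -/
def IsMobius (mu : α → α → ℤ) : Prop :=
  (∀ a : α, mu a a = 1) ∧
    ∀ a b : α, a < b → ∑ c ∈ Finset.univ.filter (fun c => a ≤ c ∧ c ≤ b), mu a c = 0

/-- `JSing ρ mu n s t` says that the interval `[s, t]` is `(n-1)`-Sing: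
`JSing 0` is Eulerian (all subintervals have Möbius value `(-1)^length`),
`JSing 1` is semi-Eulerian, and `JSing (n+1)` requires every strictly shorter
subinterval to be `JSing n`. -/
def JSing (ρ : α → ℕ) (mu : α → α → ℤ) : ℕ → α → α → Prop
  | 0 => fun s t => ∀ a b : α, s ≤ a → a ≤ b → b ≤ t → mu a b = (-1 : ℤ) ^ (ρ b - ρ a)
  | n + 1 => fun s t => ∀ a b : α, s ≤ a → a ≤ b → b ≤ t →
      ρ b - ρ a < ρ t - ρ s → JSing ρ mu n a b

lemma Fin.apply_add_sub_le_apply_of_strictMono {m : ℕ} {f : Fin m → ℕ} (hf : StrictMono f)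
    {p q : Fin m} (hpq : p ≤ q) : f p + (q - p : ℕ) ≤ f q := by
  have hmaps : Set.MapsTo f (Icc p q) (Icc (f p) (f q)) := fun x hx => by
    rw [coe_Icc, Set.mem_Icc] at hx
    simpa using ⟨hf.monotone hx.1, hf.monotone hx.2⟩
  have hcard := card_le_card_of_injOn f hmaps hf.injective.injOn
  rw [Fin.card_Icc, Nat.card_Icc] at hcard
  have := hf.monotone hpq
  omega

section ChainProd

variable {P M : Type*} [CommMonoid M]

def chainProd (f : P → P → M) {i : ℕ} (t : Fin (i + 1) → P) : M :=
  ∏ k : Fin i, f (t k.castSucc) (t k.succ)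

lemma chainProd_succ (f : P → P → M) {i : ℕ} (t : Fin (i + 2) → P) :
    chainProd f t = f (t 0) (t 1) * chainProd f (Fin.tail t) := by
  simp only [chainProd, Fin.prod_univ_succ, Fin.tail, Fin.succ_castSucc, Fin.castSucc_zero,
    Fin.succ_zero_eq_one]

lemma chainProd_cons (f : P → P → M) {i : ℕ} (x : P) (t : Fin (i + 1) → P) :
    chainProd f (Fin.cons x t : Fin (i + 2) → P) = f x (t 0) * chainProd f t := by
  simp [chainProd_succ]

lemma chainProd_eq_neg_one_pow {ρ : P → ℕ} {mu : P → P → ℤ} :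
    ∀ {i : ℕ} (t : Fin (i + 1) → P), Monotone (ρ ∘ t) →
      (∀ k : Fin i, mu (t k.castSucc) (t k.succ) = (-1) ^ (ρ (t k.succ) - ρ (t k.castSucc))) →
      chainProd mu t = (-1) ^ (ρ (t (Fin.last i)) - ρ (t 0))
  | 0, t, _, _ => by simp [chainProd]
  | i + 1, t, hmono, hlinks => by
    have htail := chainProd_eq_neg_one_pow (Fin.tail t) (hmono.comp Fin.strictMono_succ.monotone)
      fun k => hlinks k.succ
    have h01 := hmono (Fin.zero_le 1)
    have h1l := hmono (Fin.le_last 1)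
    simp only [Function.comp_apply] at h01 h1l
    have h0 := hlinks 0
    simp only [Fin.castSucc_zero, Fin.succ_zero_eq_one] at h0
    rw [chainProd_succ, htail, h0, ← pow_add]
    simp only [Fin.tail, Fin.succ_last, Nat.succ_eq_add_one, Fin.succ_zero_eq_one]
    congr 1
    omega

end ChainProd

section Graded

variable {P : Type*} [PartialOrder P] {ρ : P → ℕ} {mu : P → P → ℤ}

lemma IsMobius.apply_of_covBy [Fintype P] [DecidableRel ((· ≤ ·) : P → P → Prop)]
    (hmu : IsMobius mu) {a b : P} (h : a ⋖ b) : mu a b = -1 := by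
  classical
  have hIcc : univ.filter (fun c => a ≤ c ∧ c ≤ b) = {a, b} := by
    ext c
    simpa using Set.ext_iff.mp h.Icc_eq c
  have hsum := hmu.2 a b h.lt
  rw [hIcc, sum_pair h.ne, hmu.1] at hsum
  omega

lemma exists_subinterval_rank_eq_pred [Finite P] (hρ : Monotone ρ)
    (hcov : ∀ a b : P, a ⋖ b → ρ b = ρ a + 1) {s a b t : P} (hsa : s ≤ a) (hab : a ≤ b)
    (hbt : b ≤ t) (hlt : ρ b - ρ a < ρ t - ρ s) :
    ∃ s' t', s ≤ s' ∧ s' ≤ a ∧ b ≤ t' ∧ t' ≤ t ∧ ρ t' - ρ s' + 1 = ρ t - ρ s := by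
  have := hρ hab
  have := hρ hbt
  rcases hsa.lt_or_eq with hsa | rfl
  · obtain ⟨s', hss', hs'a⟩ := exists_covBy_le_of_lt hsa
    have := hcov _ _ hss'
    have := hρ hs'a
    exact ⟨s', t, hss'.le, hs'a, hbt, le_rfl, by omega⟩
  · obtain ⟨t', hbt', ht't⟩ := exists_le_covBy_of_lt (hbt.lt_of_ne (by rintro rfl; omega))
    have := hcov _ _ ht't
    have := hρ hbt'
    exact ⟨s, t', le_rfl, le_rfl, hbt', ht't.le, by omega⟩

theorem jSing_iff_forall_mu_eq_neg_one_pow [Finite P] (hρ : Monotone ρ)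
    (hcov : ∀ a b : P, a ⋖ b → ρ b = ρ a + 1) (n : ℕ) (s t : P) :
    JSing ρ mu n s t ↔ ∀ a b, s ≤ a → a ≤ b → b ≤ t → ρ b - ρ a + n ≤ ρ t - ρ s →
      mu a b = (-1) ^ (ρ b - ρ a) := by
  induction n generalizing s t with
  | zero =>
    refine ⟨fun h a b hsa hab hbt _ => h a b hsa hab hbt, fun h a b hsa hab hbt => ?_⟩
    have := hρ hsa
    have := hρ hbt
    exact h a b hsa hab hbt (by omega)
  | succ n ih =>
    simp only [JSing, ih]
    constructor
    · intro h a b hsa hab hbt hlen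
      obtain ⟨s', t', hss', hs'a, hbt', ht't, hrk⟩ :=
        exists_subinterval_rank_eq_pred hρ hcov hsa hab hbt (by omega)
      exact h s' t' hss' (hs'a.trans (hab.trans hbt')) ht't (by omega) a b hs'a hab hbt'
        (by omega)
    · intro h a b hsa _ hbt hlt a' b' haa' hab' hbb' hlen
      exact h a' b' (hsa.trans haa') hab' (hbb'.trans hbt) (by omega)

lemma chainProd_eq_of_forall (hρ : StrictMono ρ) {n : ℕ} {s u : P}
    (hE : ∀ a b, s ≤ a → a ≤ b → b ≤ u → ρ b - ρ a + n ≤ ρ u - ρ s →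
      mu a b = (-1) ^ (ρ b - ρ a))
    {i : ℕ} (t : Fin (i + 1) → P) (ht : StrictMono t) (h0 : t 0 = s) (hl : t (Fin.last i) = u)
    (hi : n < i) : chainProd mu t = (-1) ^ (ρ u - ρ s) := by
  subst h0 hl
  refine chainProd_eq_neg_one_pow t (hρ.comp ht).monotone fun k => ?_
  have hlink := hρ (ht (Fin.castSucc_lt_succ (i := k)))
  -- the links before and after the `k`-th take up at least one rank each
  have hbelow := Fin.apply_add_sub_le_apply_of_strictMono (hρ.comp ht) (Fin.zero_le k.castSucc)
  have habove := Fin.apply_add_sub_le_apply_of_strictMono (hρ.comp ht) (Fin.le_last k.succ)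
  simp only [Function.comp_apply, Fin.val_castSucc, Fin.val_succ, Fin.val_zero, Fin.val_last]
    at hbelow habove
  exact hE _ _ (ht.monotone (Fin.zero_le _)) (ht (Fin.castSucc_lt_succ (i := k))).le
    (ht.monotone (Fin.le_last _)) (by omega)

lemma exists_chain_prepend_saturated [Fintype P] [DecidableRel ((· ≤ ·) : P → P → Prop)]
    (hρ : StrictMono ρ) (hcov : ∀ a b : P, a ⋖ b → ρ b = ρ a + 1) (hmu : IsMobius mu)
    {y x : P} (hyx : y ≤ x)
    {i : ℕ} (t : Fin (i + 1) → P) (ht : StrictMono t) (h0 : t 0 = x) :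
    ∃ (i' : ℕ) (t' : Fin (i' + 1) → P), StrictMono t' ∧ t' 0 = y ∧
      t' (Fin.last i') = t (Fin.last i) ∧ i' = i + (ρ x - ρ y) ∧
      chainProd mu t' = (-1) ^ (ρ x - ρ y) * chainProd mu t := by
  generalize hk : ρ x - ρ y = k
  induction k generalizing x i t with
  | zero =>
    obtain rfl : y = x := hyx.eq_of_not_lt fun h => by have := hρ h; omega
    exact ⟨i, t, ht, h0, rfl, rfl, by simp⟩
  | succ k ih =>
    obtain ⟨z, hyz, hzx⟩ := exists_le_covBy_of_lt (hyx.lt_of_ne (by rintro rfl; omega))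
    have hz := hcov _ _ hzx
    obtain ⟨i', t', ht', h0', hl', hi', hprod⟩ :=
      ih hyz (Fin.cons z t) (ht.vecCons (h0 ▸ hzx.lt)) rfl (by omega)
    refine ⟨i', t', ht', h0', by rw [hl', Fin.cons_last], by omega, ?_⟩
    rw [hprod, chainProd_cons, h0, hmu.apply_of_covBy hzx, pow_succ]
    ring

lemma exists_chain_through [Fintype P] [DecidableRel ((· ≤ ·) : P → P → Prop)]
    (hρ : StrictMono ρ) (hcov : ∀ a b : P, a ⋖ b → ρ b = ρ a + 1)
    (hmu : IsMobius mu) {s a b u : P} (hsa : s ≤ a) (hab : a < b) (hbu : b ≤ u) :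
    ∃ (i : ℕ) (t : Fin (i + 1) → P), StrictMono t ∧ t 0 = s ∧ t (Fin.last i) = u ∧
      i = ρ a - ρ s + 1 + (ρ u - ρ b) ∧
      chainProd mu t = (-1) ^ (ρ a - ρ s) * mu a b * (-1) ^ (ρ u - ρ b) := by
  obtain ⟨i₁, t₁, ht₁, h0₁, hl₁, hi₁, hprod₁⟩ :=
    exists_chain_prepend_saturated hρ hcov hmu hbu (fun _ : Fin 1 => u)
      (Subsingleton.strictMono (α := Fin 1) _) rfl
  obtain ⟨i₂, t₂, ht₂, h0₂, hl₂, hi₂, hprod₂⟩ :=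
    exists_chain_prepend_saturated hρ hcov hmu hsa (Fin.cons a t₁) (ht₁.vecCons (h0₁ ▸ hab)) rfl
  refine ⟨i₂, t₂, ht₂, h0₂, by rw [hl₂, Fin.cons_last, hl₁], by omega, ?_⟩
  rw [hprod₂, chainProd_cons, hprod₁, h0₁]
  simp only [chainProd, univ_eq_empty, prod_empty, mul_one]
  ring

end Graded

lemma eq_neg_one_pow_of_mul_eq {x : ℤ} {p q r : ℕ}
    (h : (-1) ^ p * x * (-1) ^ q = (-1) ^ (p + r + q)) : x = (-1) ^ r := by
  rw [pow_add, pow_add] at h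
  have hp : ((-1 : ℤ) ^ p) ≠ 0 := pow_ne_zero _ (by norm_num)
  have hq : ((-1 : ℤ) ^ q) ≠ 0 := pow_ne_zero _ (by norm_num)
  exact mul_left_cancel₀ hp (mul_right_cancel₀ hq h)

theorem jSing_iff_chain_products_general (d : ℕ) (ρ : α → ℕ) (mu : α → α → ℤ)
    (hgr : IsGraded ρ d) (hmu : IsMobius mu)
    (j : ℤ) :
    JSing ρ mu (j + 1).toNat ⊥ ⊤ ↔
      ∀ (i : ℕ) (t : Fin (i + 1) → α), StrictMono t → t 0 = ⊥ → t (Fin.last i) = ⊤ →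
        j + 1 < (i : ℤ) →
        ∏ k : Fin i, mu (t k.castSucc) (t k.succ) = (-1 : ℤ) ^ (d + 1) := by
  obtain ⟨hbot, htop, hcov, hρ⟩ := hgr
  have hρ : StrictMono ρ := hρ
  rw [jSing_iff_forall_mu_eq_neg_one_pow hρ.monotone hcov]
  refine ⟨fun hE i t ht h0 hl hi => ?_, fun hC a b _ hab _ hlen => ?_⟩
  · have hi0 : 0 < i := Nat.pos_of_ne_zero <| by
      rintro rfl
      have := congrArg ρ (h0.symm.trans hl)
      omega
    rw [← Nat.sub_zero (d + 1), ← htop, ← hbot]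
    exact chainProd_eq_of_forall hρ hE t ht h0 hl ((Int.toNat_lt' hi0).2 hi)
  · rcases hab.eq_or_lt with rfl | hab
    · simp [hmu.1]
    obtain ⟨i, t, ht, h0, hl, hi, hprod⟩ := exists_chain_through hρ hcov hmu bot_le hab le_top
    have hchain : chainProd mu t = (-1) ^ (d + 1) :=
      hC i t ht h0 hl (by have := Int.self_le_toNat (j + 1); omega)
    have hρab := hρ.monotone hab.le
    have hρb := htop ▸ hρ.monotone (le_top : b ≤ ⊤)
    rw [hprod, hbot, htop] at hchain
    rw [hbot, htop] at hlen
    exact eq_neg_one_pow_of_mul_eq (by rw [hchain]; congr 1; omega)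

/-- a graded poset of rank `d+1` is `j`-Sing if and only if for every chain
`0̂ = t_0 < t_1 < ... < t_i = 1̂` with `i > j + 1`, the product of the Möbius values of
consecutive intervals equals `(-1)^{d+1}`. -/
theorem jSing_iff_chain_products (d : ℕ) (ρ : α → ℕ) (mu : α → α → ℤ)
    (hgr : IsGraded ρ d) (hmu : IsMobius mu)
    (j : ℤ) (hj : -1 ≤ j) (hjd : j ≤ d) :
    JSing ρ mu (j + 1).toNat ⊥ ⊤ ↔
      ∀ (i : ℕ) (t : Fin (i + 1) → α), StrictMono t → t 0 = ⊥ → t (Fin.last i) = ⊤ →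
        j + 1 < (i : ℤ) →
        ∏ k : Fin i, mu (t k.castSucc) (t k.succ) = (-1 : ℤ) ^ (d + 1) :=
  jSing_iff_chain_products_general d ρ mu hgr hmu j
end

section
/- Let P be a finite graded poset of rank d+1 (with 0̂ and 1̂) and let ĥ(P,x) be its toric h-polynomial. Then ĥ(P,x) - x^d · ĥ(P,1/x) = -[μ_P(0̂,1̂) - (-1)^{d+1}]·(x-1)^d + ∑_{q: 1 ≤ ρ(q) ≤ d} ( -(x-1)^{d-ρ(q)} [ĝ([0̂,q],x) + (x-1)ĥ([0̂,q],x)]·μ_P(q,1̂) - (1-x)^{d-ρ(q)} ĝ([0̂,q],1/x)·x^{ρ(q)} ). -/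
open Finset Polynomial

variable {α : Type*} [Fintype α] [PartialOrder α] [BoundedOrder α] [DecidableEq α]
  [DecidableRel ((· ≤ ·) : α → α → Prop)] [DecidableRel ((· < ·) : α → α → Prop)]

/-- `hh q` and `g q` are the toric polynomials `ĥ([0̂,q], x)` and `ĝ([0̂,q], x)` of the lower
intervals, defined by Stanley's recursion.  Writing `ĥ([0̂,q],x) = ĥ_r + ĥ_{r-1} x + ⋯ + ĥ_0 x^r`
with `r = ρ(q) - 1`, the polynomial `ĝ` has coefficients `ĝ_k = ĥ_{r-k} - ĥ_{r-k+1}` for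
`k ≤ ⌊r/2⌋` and `0` above. -/
def ToricPair (ρ : α → ℕ) (hh g : α → Polynomial ℤ) : Prop :=
  hh ⊥ = 1 ∧ g ⊥ = 1 ∧
  (∀ q : α, q ≠ ⊥ →
    hh q = ∑ p ∈ Finset.univ.filter (· < q), g p * (X - 1) ^ (ρ q - 1 - ρ p)) ∧
  (∀ q : α, q ≠ ⊥ →
    (g q).coeff 0 = (hh q).coeff 0 ∧
    (∀ k, 1 ≤ k → k ≤ (ρ q - 1) / 2 → (g q).coeff k = (hh q).coeff k - (hh q).coeff (k - 1)) ∧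
    (∀ k, (ρ q - 1) / 2 < k → (g q).coeff k = 0))

lemma reflect_finset_sum {ι : Type*} (s : Finset ι) (f : ι → Polynomial ℤ) (N : ℕ) :
    Polynomial.reflect N (∑ i ∈ s, f i) = ∑ i ∈ s, Polynomial.reflect N (f i) := by
  induction s using Finset.cons_induction with
  | empty => simp [Polynomial.reflect_zero]
  | cons a s ha ih => rw [Finset.sum_cons, Finset.sum_cons, Polynomial.reflect_add, ih]

lemma reflect_X_sub_one_pow (n : ℕ) :
    Polynomial.reflect n ((X - 1 : Polynomial ℤ) ^ n) = (1 - X) ^ n := by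
  induction n with
  | zero => simp
  | succ n ih =>
    have h1 : ((X - 1 : Polynomial ℤ) ^ n).natDegree ≤ n := by
      refine (Polynomial.natDegree_pow_le).trans ?_
      have : (X - 1 : Polynomial ℤ).natDegree = 1 := by
        simpa using Polynomial.natDegree_X_sub_C (1 : ℤ)
      simp [this]
    have h2 : (X - 1 : Polynomial ℤ).natDegree ≤ 1 := by
      simpa using (Polynomial.natDegree_X_sub_C (1 : ℤ)).le
    rw [pow_succ, Polynomial.reflect_mul _ _ h1 h2, ih, pow_succ]
    congr 1
    rw [Polynomial.reflect_sub, Polynomial.reflect_one_X, Polynomial.reflect_one]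
    ring

/-- the basic toric identity (Lemma 5.6):
`ĥ(P,x) - x^d ĥ(P,1/x) = -[μ(0̂,1̂) - (-1)^{d+1}](x-1)^d +
∑_{1 ≤ ρ(q) ≤ d} ( -(x-1)^{d-ρ(q)}[ĝ(Q) + (x-1)ĥ(Q)]μ(q,1̂) - (1-x)^{d-ρ(q)} ĝ(Q,1/x) x^{ρ(q)} )`,
where `x^{ρ(q)} ĝ(Q,1/x)` is the reflection `reflect (ρ q) (g q)`. -/
theorem toric_h_difference (d : ℕ) (ρ : α → ℕ) (mu : α → α → ℤ) (hh g : α → Polynomial ℤ)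
    (hgr : IsGraded ρ d) (hmu : IsMobius mu) (htoric : ToricPair ρ hh g) :
    hh ⊤ - Polynomial.reflect d (hh ⊤)
      = -Polynomial.C (mu ⊥ ⊤ - (-1 : ℤ) ^ (d + 1)) * (X - 1) ^ d
        + ∑ q ∈ Finset.univ.filter (fun q : α => 1 ≤ ρ q ∧ ρ q ≤ d),
            (-((X - 1) ^ (d - ρ q) * (g q + (X - 1) * hh q) * Polynomial.C (mu q ⊤))
              - (1 - X) ^ (d - ρ q) * Polynomial.reflect (ρ q) (g q)) := by
  obtain ⟨hρb, hρt, -, hstrict⟩ := hgr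
  obtain ⟨hmu1, hmu2⟩ := hmu
  obtain ⟨hhb, hgb, hrec, hgdef⟩ := htoric
  have hmono : ∀ p q : α, p ≤ q → ρ p ≤ ρ q := by
    intro p q h
    rcases lt_or_eq_of_le h with h | rfl
    · exact (hstrict _ _ h).le
    · exact le_rfl
  have hbotne : (⊥ : α) ≠ ⊤ := by
    intro h; rw [h, hρt] at hρb; omega
  have htopne : (⊤ : α) ≠ ⊥ := Ne.symm hbotne
  have hdeg : ∀ q : α, (g q).natDegree ≤ ρ q := by
    intro q
    by_cases hq : q = ⊥
    · subst hq; rw [hgb]; simp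
    · rw [Polynomial.natDegree_le_iff_coeff_eq_zero]
      intro N hN
      refine (hgdef q hq).2.2 N ?_
      have := Nat.div_le_self (ρ q - 1) 2
      omega
  have hsplit : ∀ q : α, (Finset.univ.filter (· ≤ q)) = insert q (Finset.univ.filter (· < q)) := by
    intro q; ext p
    simp only [Finset.mem_filter, Finset.mem_univ, true_and, Finset.mem_insert]
    constructor
    · intro h
      rcases eq_or_lt_of_le h with h | h
      · exact Or.inl h
      · exact Or.inr h
    · rintro (rfl | h)
      · exact le_rfl
      · exact h.le
  have hnotmem : ∀ q : α, q ∉ Finset.univ.filter (· < q) := by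
    intro q; simp
  set S : α → Polynomial ℤ :=
    fun q => ∑ p ∈ Finset.univ.filter (· ≤ q), g p * (X - 1) ^ (ρ q - ρ p) with hSdef
  have hSsplit : ∀ q : α,
      S q = g q + ∑ p ∈ Finset.univ.filter (· < q), g p * (X - 1) ^ (ρ q - ρ p) := by
    intro q
    simp only [hSdef]
    rw [hsplit q, Finset.sum_insert (hnotmem q), Nat.sub_self, pow_zero, mul_one]
  have hSbot : S ⊥ = 1 := by
    rw [hSsplit]
    have he : Finset.univ.filter (· < (⊥ : α)) = ∅ :=
      Finset.filter_false_of_mem (fun p _ => not_lt_bot)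
    rw [he, Finset.sum_empty, add_zero, hgb]
  have hS : ∀ q : α, q ≠ ⊥ → S q = g q + (X - 1) * hh q := by
    intro q hq
    rw [hSsplit q, hrec q hq, Finset.mul_sum]
    congr 1
    refine Finset.sum_congr rfl fun p hp => ?_
    have hlt : p < q := (Finset.mem_filter.mp hp).2
    have he : ρ q - ρ p = (ρ q - 1 - ρ p) + 1 := by
      have := hstrict p q hlt; omega
    rw [he, pow_succ]; ring
  set T : α → Polynomial ℤ :=
    fun q => ∑ p ∈ Finset.univ.filter (· ≤ q),
      Polynomial.C (mu p q) * S p * (X - 1) ^ (ρ q - ρ p) with hTdef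
  have hTS : ∀ q : α,
      ∑ p ∈ Finset.univ.filter (· ≤ q), T p * (X - 1) ^ (ρ q - ρ p) = S q := by
    intro q
    have step1 : ∀ p ∈ Finset.univ.filter (· ≤ q),
        T p * (X - 1) ^ (ρ q - ρ p)
          = ∑ r ∈ Finset.univ.filter (· ≤ p),
              Polynomial.C (mu r p) * (S r * (X - 1) ^ (ρ q - ρ r)) := by
      intro p hp
      have hpq : p ≤ q := (Finset.mem_filter.mp hp).2
      simp only [hTdef]
      rw [Finset.sum_mul]
      refine Finset.sum_congr rfl fun r hr => ?_
      have hrp : r ≤ p := (Finset.mem_filter.mp hr).2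
      have he : (X - 1 : Polynomial ℤ) ^ (ρ p - ρ r) * (X - 1) ^ (ρ q - ρ p)
          = (X - 1) ^ (ρ q - ρ r) := by
        rw [← pow_add]
        congr 1
        have h1 := hmono r p hrp; have h2 := hmono p q hpq
        omega
      rw [mul_assoc, mul_assoc, he]
    rw [Finset.sum_congr rfl step1]
    have swap :
        (∑ p ∈ Finset.univ.filter (· ≤ q), ∑ r ∈ Finset.univ.filter (· ≤ p),
            Polynomial.C (mu r p) * (S r * (X - 1) ^ (ρ q - ρ r)))
          = ∑ r ∈ Finset.univ.filter (· ≤ q),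
              ∑ p ∈ Finset.univ.filter (fun p => r ≤ p ∧ p ≤ q),
                Polynomial.C (mu r p) * (S r * (X - 1) ^ (ρ q - ρ r)) := by
      rw [Finset.sum_filter]
      rw [show (∑ r ∈ Finset.univ.filter (· ≤ q),
              ∑ p ∈ Finset.univ.filter (fun p => r ≤ p ∧ p ≤ q),
                Polynomial.C (mu r p) * (S r * (X - 1) ^ (ρ q - ρ r)))
          = ∑ r ∈ Finset.univ, ∑ p ∈ Finset.univ,
              if r ≤ p ∧ p ≤ q then
                Polynomial.C (mu r p) * (S r * (X - 1) ^ (ρ q - ρ r)) else 0 from ?_]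
      · rw [Finset.sum_comm]
        refine Finset.sum_congr rfl fun p _ => ?_
        by_cases hpq : p ≤ q
        · rw [if_pos hpq, Finset.sum_filter]
          refine Finset.sum_congr rfl fun r _ => ?_
          by_cases hrp : r ≤ p
          · rw [if_pos hrp, if_pos ⟨hrp, hpq⟩]
          · rw [if_neg hrp, if_neg (fun h => hrp h.1)]
        · rw [if_neg hpq]
          exact (Finset.sum_eq_zero fun r _ => if_neg (fun h => hpq h.2)).symm
      · rw [Finset.sum_filter]
        refine Finset.sum_congr rfl fun r _ => ?_
        by_cases hrq : r ≤ q
        · rw [if_pos hrq, Finset.sum_filter]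
        · rw [if_neg hrq]
          exact (Finset.sum_eq_zero fun p _ => if_neg (fun h => hrq (h.1.trans h.2))).symm
    rw [swap]
    have inner : ∀ r ∈ Finset.univ.filter (· ≤ q),
        (∑ p ∈ Finset.univ.filter (fun p => r ≤ p ∧ p ≤ q),
            Polynomial.C (mu r p) * (S r * (X - 1) ^ (ρ q - ρ r)))
          = Polynomial.C (∑ p ∈ Finset.univ.filter (fun p => r ≤ p ∧ p ≤ q), mu r p)
              * (S r * (X - 1) ^ (ρ q - ρ r)) := by
      intro r _
      rw [map_sum]
      exact (Finset.sum_mul _ _ _).symm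
    have hqmem : q ∈ Finset.univ.filter (· ≤ q) :=
      Finset.mem_filter.mpr ⟨Finset.mem_univ q, le_rfl⟩
    calc ∑ r ∈ Finset.univ.filter (· ≤ q),
            ∑ p ∈ Finset.univ.filter (fun p => r ≤ p ∧ p ≤ q),
              Polynomial.C (mu r p) * (S r * (X - 1) ^ (ρ q - ρ r))
        = ∑ r ∈ Finset.univ.filter (· ≤ q),
            Polynomial.C (∑ p ∈ Finset.univ.filter (fun p => r ≤ p ∧ p ≤ q), mu r p)
              * (S r * (X - 1) ^ (ρ q - ρ r)) := Finset.sum_congr rfl inner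
      _ = S q := by
          rw [Finset.sum_eq_single_of_mem q hqmem ?side]
          · have hq1 : Finset.univ.filter (fun p => q ≤ p ∧ p ≤ q) = {q} := by
              ext p
              simp only [Finset.mem_filter, Finset.mem_univ, true_and, Finset.mem_singleton]
              constructor
              · rintro ⟨h1, h2⟩; exact le_antisymm h2 h1
              · rintro rfl; exact ⟨le_rfl, le_rfl⟩
            rw [hq1, Finset.sum_singleton, hmu1, Nat.sub_self, pow_zero, mul_one, map_one,
              one_mul]
          case side =>
            intro r hr hne
            have hrq : r < q := lt_of_le_of_ne (Finset.mem_filter.mp hr).2 hne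
            rw [hmu2 r q hrq, map_zero, zero_mul]
  have main : ∀ q : α, (∀ p : α, p < q → T p = g p) → T q = g q := by
    intro q ih
    have h1 := hTS q
    rw [hsplit q, Finset.sum_insert (hnotmem q), Nat.sub_self, pow_zero, mul_one,
      hSsplit q] at h1
    have h2 : ∑ p ∈ Finset.univ.filter (· < q), T p * (X - 1) ^ (ρ q - ρ p)
        = ∑ p ∈ Finset.univ.filter (· < q), g p * (X - 1) ^ (ρ q - ρ p) :=
      Finset.sum_congr rfl fun p hp => by rw [ih p (Finset.mem_filter.mp hp).2]
    rw [h2] at h1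
    exact add_right_cancel h1
  have hT : ∀ q : α, T q = g q := by
    have key : ∀ n : ℕ, ∀ q : α, ρ q ≤ n → T q = g q := by
      intro n
      induction n with
      | zero =>
        intro q hq
        refine main q fun p hp => absurd (lt_of_lt_of_le (hstrict p q hp) hq) (Nat.not_lt_zero _)
      | succ n ih =>
        intro q hq
        exact main q fun p hp => ih p (by have := hstrict p q hp; omega)
    exact fun q => key (ρ q) q le_rfl
  -- split of the strict filter at ⊤
  have hFsplit : Finset.univ.filter (· < (⊤ : α))
      = insert ⊥ (Finset.univ.filter (fun q : α => 1 ≤ ρ q ∧ ρ q ≤ d)) := by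
    ext p
    simp only [Finset.mem_filter, Finset.mem_univ, true_and, Finset.mem_insert]
    constructor
    · intro h
      by_cases hp : p = ⊥
      · exact Or.inl hp
      · refine Or.inr ⟨?_, ?_⟩
        · have hbp : (⊥ : α) < p := lt_of_le_of_ne bot_le (Ne.symm hp)
          have := hstrict _ _ hbp; omega
        · have := hstrict p ⊤ h; omega
    · rintro (rfl | ⟨h1, h2⟩)
      · exact lt_of_le_of_ne bot_le hbotne
      · refine lt_of_le_of_ne le_top fun h => ?_
        rw [h, hρt] at h2; omega
  have hbotF : (⊥ : α) ∉ Finset.univ.filter (fun q : α => 1 ≤ ρ q ∧ ρ q ≤ d) := by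
    simp [hρb]
  have hFne : ∀ p : α, p ∈ Finset.univ.filter (fun q : α => 1 ≤ ρ q ∧ ρ q ≤ d) → p ≠ ⊥ := by
    intro p hp h
    rw [h] at hp
    exact hbotF hp
  have hFle : ∀ p : α, p ∈ Finset.univ.filter (fun q : α => 1 ≤ ρ q ∧ ρ q ≤ d) → ρ p ≤ d :=
    fun p hp => ((Finset.mem_filter.mp hp).2).2
  -- Step 1 : Möbius-inverted expression for hh ⊤
  have hx : (X - 1 : Polynomial ℤ) ≠ 0 := by
    simpa using Polynomial.X_sub_C_ne_zero (1 : ℤ)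
  have step1 : hh ⊤ = -(Polynomial.C (mu ⊥ ⊤) * (X - 1) ^ d)
      - ∑ q ∈ Finset.univ.filter (fun q : α => 1 ≤ ρ q ∧ ρ q ≤ d),
          (X - 1) ^ (d - ρ q) * (g q + (X - 1) * hh q) * Polynomial.C (mu q ⊤) := by
    apply mul_left_cancel₀ hx
    have h0 := hT ⊤
    simp only [hTdef] at h0
    rw [hsplit ⊤, Finset.sum_insert (hnotmem ⊤), Nat.sub_self, pow_zero, mul_one, hmu1,
      hFsplit, Finset.sum_insert hbotF, hSbot, hρb, hρt, hS ⊤ htopne] at h0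
    have hsum : ∑ q ∈ Finset.univ.filter (fun q : α => 1 ≤ ρ q ∧ ρ q ≤ d),
        Polynomial.C (mu q ⊤) * S q * (X - 1) ^ (d + 1 - ρ q)
        = (X - 1) * ∑ q ∈ Finset.univ.filter (fun q : α => 1 ≤ ρ q ∧ ρ q ≤ d),
            (X - 1) ^ (d - ρ q) * (g q + (X - 1) * hh q) * Polynomial.C (mu q ⊤) := by
      rw [Finset.mul_sum]
      refine Finset.sum_congr rfl fun p hp => ?_
      rw [hS p (hFne p hp)]
      have he : d + 1 - ρ p = (d - ρ p) + 1 := by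
        have := hFle p hp; omega
      rw [he, pow_succ]; ring
    rw [hsum, Nat.sub_zero, Polynomial.C_1, one_mul, mul_one] at h0
    linear_combination h0
  -- Step 2 : the reflected polynomial
  have step2 : Polynomial.reflect d (hh ⊤)
      = (1 - X) ^ d + ∑ q ∈ Finset.univ.filter (fun q : α => 1 ≤ ρ q ∧ ρ q ≤ d),
          (1 - X) ^ (d - ρ q) * Polynomial.reflect (ρ q) (g q) := by
    have hrect : hh ⊤ = ∑ p ∈ Finset.univ.filter (· < (⊤ : α)), g p * (X - 1) ^ (d - ρ p) := by
      rw [hrec ⊤ htopne]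
      refine Finset.sum_congr rfl fun p _ => ?_
      have he : ρ (⊤ : α) - 1 - ρ p = d - ρ p := by rw [hρt]; omega
      rw [he]
    rw [hrect, reflect_finset_sum]
    have hterm : ∀ p ∈ Finset.univ.filter (· < (⊤ : α)),
        Polynomial.reflect d (g p * (X - 1) ^ (d - ρ p))
          = Polynomial.reflect (ρ p) (g p) * (1 - X) ^ (d - ρ p) := by
      intro p hp
      have hlt : p < ⊤ := (Finset.mem_filter.mp hp).2
      have hle : ρ p ≤ d := by have := hstrict p ⊤ hlt; omega
      have hb : ((X - 1 : Polynomial ℤ) ^ (d - ρ p)).natDegree ≤ d - ρ p := by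
        refine (Polynomial.natDegree_pow_le).trans ?_
        have hone : (X - 1 : Polynomial ℤ).natDegree = 1 := by
          simpa using Polynomial.natDegree_X_sub_C (1 : ℤ)
        simp [hone]
      have hmul := Polynomial.reflect_mul (g p) ((X - 1 : Polynomial ℤ) ^ (d - ρ p))
        (hdeg p) hb
      rw [Nat.add_sub_cancel' hle] at hmul
      rw [hmul, reflect_X_sub_one_pow]
    rw [Finset.sum_congr rfl hterm, hFsplit, Finset.sum_insert hbotF, hgb, hρb,
      Polynomial.reflect_one, pow_zero, one_mul, Nat.sub_zero]
    congr 1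
    exact Finset.sum_congr rfl fun p _ => mul_comm _ _
  -- Final assembly
  rw [step2, step1]
  have hsub : ∑ q ∈ Finset.univ.filter (fun q : α => 1 ≤ ρ q ∧ ρ q ≤ d),
      (-((X - 1) ^ (d - ρ q) * (g q + (X - 1) * hh q) * Polynomial.C (mu q ⊤))
        - (1 - X) ^ (d - ρ q) * Polynomial.reflect (ρ q) (g q))
      = -(∑ q ∈ Finset.univ.filter (fun q : α => 1 ≤ ρ q ∧ ρ q ≤ d),
            (X - 1) ^ (d - ρ q) * (g q + (X - 1) * hh q) * Polynomial.C (mu q ⊤))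
        - ∑ q ∈ Finset.univ.filter (fun q : α => 1 ≤ ρ q ∧ ρ q ≤ d),
            (1 - X) ^ (d - ρ q) * Polynomial.reflect (ρ q) (g q) := by
    rw [Finset.sum_sub_distrib, Finset.sum_neg_distrib]
  rw [hsub]
  have hneg : ((1 : Polynomial ℤ) - X) ^ d = (-1) ^ d * (X - 1) ^ d := by
    rw [show (1 : Polynomial ℤ) - X = -(X - 1) by ring, neg_pow]
  rw [hneg, map_sub, map_pow, map_neg, map_one]
  ring
end

section
/- Let P be a j-Sing graded poset of rank d+1 with d even. Then 2·e_P(0̂,1̂) = -∑_{1 ≤ ρ(t) ≤ j} e_P(t,1̂) - ∑_{d-j+1 ≤ ρ(t) ≤ d} e_P(0̂,t). If instead d is odd, then ∑_{1 ≤ ρ(t) ≤ j} e_P(t,1̂) = ∑_{d-j+1 ≤ ρ(t) ≤ d} e_P(0̂,t). -/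
open Finset

variable {α : Type*} [Fintype α] [PartialOrder α] [BoundedOrder α] [DecidableEq α]
  [DecidableRel ((· ≤ ·) : α → α → Prop)]

/-!
Write `e(s, t) = μ(s, t) - (-1)^(ρ t - ρ s)`. Summing the defining recursion of the Möbius
function along the first row `μ(0̂, ·)` and along the last column `μ(·, 1̂)` gives
`∑ₜ e(0̂, t) = -K` and `∑ₜ e(t, 1̂) = -(-1)^(d+1) K` for `K = ∑ₜ (-1)^ρ(t)`. Since short
intervals of a `j`-Sing poset are Eulerian, only the ranks listed in the statement (and
the whole interval) contribute to these sums; eliminating `K` gives both relations.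
-/

lemma neg_one_pow_sub_of_le {R : Type*} [CommRing R] {m n : ℕ} (h : m ≤ n) :
    (-1 : R) ^ (n - m) = (-1) ^ n * (-1) ^ m := by
  obtain ⟨k, rfl⟩ := Nat.exists_eq_add_of_le h
  rw [Nat.add_sub_cancel_left, pow_add, mul_right_comm, ← pow_add, ← two_mul, pow_mul]
  simp

def mobiusError {P : Type*} (ρ : P → ℕ) (mu : P → P → ℤ) (s t : P) : ℤ :=
  mu s t - (-1) ^ (ρ t - ρ s)

section Graded

variable {P : Type*} [PartialOrder P] [BoundedOrder P] {ρ : P → ℕ} {d : ℕ}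

lemma IsGraded.rank_mono (hgr : IsGraded ρ d) {x y : P} (h : x ≤ y) : ρ x ≤ ρ y := by
  rcases h.lt_or_eq with h | rfl
  · exact (hgr.2.2.2 _ _ h).le
  · rfl

lemma IsGraded.rank_le (hgr : IsGraded ρ d) (x : P) : ρ x ≤ d + 1 :=
  hgr.2.1 ▸ hgr.rank_mono le_top

lemma IsGraded.eq_bot_of_rank_eq_zero (hgr : IsGraded ρ d) {x : P} (hx : ρ x = 0) : x = ⊥ := by
  obtain ⟨hbot, -, -, hlt⟩ := hgr
  by_contra hne
  have := hlt _ _ (bot_lt_iff_ne_bot.2 hne)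
  omega

lemma IsGraded.eq_top_of_rank_eq (hgr : IsGraded ρ d) {x : P} (hx : ρ x = d + 1) : x = ⊤ := by
  obtain ⟨-, htop, -, hlt⟩ := hgr
  by_contra hne
  have := hlt _ _ (lt_top_iff_ne_top.2 hne)
  omega

lemma IsGraded.bot_lt_top (hgr : IsGraded ρ d) : (⊥ : P) < ⊤ :=
  bot_lt_iff_ne_bot.2 fun h => by simpa [h, hgr.1] using hgr.2.1

lemma IsGraded.exists_rank_eq [Finite P] (hgr : IsGraded ρ d) {x y : P} (hxy : x ≤ y) {r : ℕ}
    (hxr : ρ x ≤ r) (hry : r ≤ ρ y) : ∃ c, x ≤ c ∧ c ≤ y ∧ ρ c = r := by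
  obtain ⟨k, hk⟩ : ∃ k, ρ y - r = k := ⟨_, rfl⟩
  induction k generalizing y with
  | zero => exact ⟨y, hxy, le_rfl, by omega⟩
  | succ k ih =>
    have hxy' : x < y := hxy.lt_of_ne (by rintro rfl; omega)
    obtain ⟨c, hxc, hcy⟩ := exists_le_covBy_of_lt hxy'
    have hc := hgr.2.2.1 _ _ hcy
    obtain ⟨z, hxz, hzc, hz⟩ := ih hxc (by omega) (by omega)
    exact ⟨z, hxz, hzc.trans hcy.le, hz⟩

end Graded

section Sing

variable {P : Type*} [PartialOrder P] [BoundedOrder P] [Finite P] {ρ : P → ℕ} {d : ℕ}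
  {mu : P → P → ℤ}

lemma JSing.mu_eq_neg_one_pow (hgr : IsGraded ρ d) {n : ℕ} {s t a b : P}
    (hst : JSing ρ mu n s t) (hsa : s ≤ a) (hab : a ≤ b) (hbt : b ≤ t)
    (hlen : ρ b - ρ a + n ≤ ρ t - ρ s) : mu a b = (-1) ^ (ρ b - ρ a) := by
  induction n generalizing s t with
  | zero => exact hst a b hsa hab hbt
  | succ n ih =>
    have := hgr.rank_mono hsa
    have := hgr.rank_mono hab
    have := hgr.rank_mono hbt
    -- Enlarge `[a, b]` inside `[s, t]` to an interval of length `ρ b - ρ a + n < ρ t - ρ s`.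
    set p := min n (ρ a - ρ s)
    obtain ⟨s', hss', hs'a, hs'⟩ :=
      hgr.exists_rank_eq hsa (r := ρ a - p) (by omega) (by omega)
    obtain ⟨t', hbt', ht't, ht'⟩ :=
      hgr.exists_rank_eq hbt (r := ρ b + (n - p)) (by omega) (by omega)
    exact ih (hst s' t' hss' (hs'a.trans (hab.trans hbt')) ht't (by omega)) hs'a hbt' (by omega)

lemma JSing.mobiusError_eq_zero (hgr : IsGraded ρ d) {j : ℤ}
    (hsing : JSing ρ mu (j + 1).toNat ⊥ ⊤) {a b : P} (hab : a ≤ b)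
    (hlen : (ρ b : ℤ) ≤ ρ a + d - j) : mobiusError ρ mu a b = 0 := by
  have := hgr.rank_mono hab
  have := hgr.rank_le b
  rw [mobiusError, sub_eq_zero]
  exact hsing.mu_eq_neg_one_pow hgr bot_le hab le_top (by rw [hgr.1, hgr.2.1]; omega)

end Sing

section Mobius

variable {P : Type*} [Fintype P] [PartialOrder P] [DecidableRel ((· ≤ ·) : P → P → Prop)]
  {mu : P → P → ℤ}

lemma filter_le_le_eq_Icc [LocallyFiniteOrder P] (a b : P) :
    univ.filter (fun c => a ≤ c ∧ c ≤ b) = Icc a b := by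
  ext c
  simp

lemma IsMobius.eq_incidenceAlgebra_mu [DecidableEq P] [LocallyFiniteOrder P]
    (hmu : IsMobius mu) {a b : P} (hab : a ≤ b) : mu a b = IncidenceAlgebra.mu ℤ a b := by
  induction b using WellFoundedLT.induction with
  | _ b ih =>
  rcases hab.eq_or_lt with rfl | hab
  · rw [hmu.1, IncidenceAlgebra.mu_self]
  have hsum := hmu.2 a b hab
  rw [filter_le_le_eq_Icc, ← Ico_insert_right hab.le, sum_insert right_notMem_Ico,
    add_eq_zero_iff_eq_neg] at hsum
  rw [hsum, IncidenceAlgebra.mu_eq_neg_sum_Ico_of_ne hab.ne]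
  exact congrArg _ (sum_congr rfl fun c hc => ih c (mem_Ico.1 hc).2 (mem_Ico.1 hc).1)

lemma IsMobius.sum_mu_left_eq_zero (hmu : IsMobius mu) {a b : P} (hab : a < b) :
    ∑ c ∈ univ.filter (fun c => a ≤ c ∧ c ≤ b), mu c b = 0 := by
  classical
  let := Fintype.toLocallyFiniteOrder (α := P)
  rw [filter_le_le_eq_Icc,
    sum_congr rfl fun c hc => hmu.eq_incidenceAlgebra_mu (mem_Icc.1 hc).2,
    IncidenceAlgebra.sum_Icc_mu_left, if_neg hab.ne]

end Mobius

section Bounded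

variable {P : Type*} [Fintype P] [PartialOrder P] [BoundedOrder P]
  [DecidableRel ((· ≤ ·) : P → P → Prop)] {ρ : P → ℕ} {d : ℕ} {mu : P → P → ℤ}

lemma filter_bot_le_le_top_eq_univ :
    univ.filter (fun c : P => ⊥ ≤ c ∧ c ≤ ⊤) = univ :=
  filter_true_of_mem fun _ _ => ⟨bot_le, le_top⟩

lemma IsMobius.sum_mobiusError_bot (hgr : IsGraded ρ d) (hmu : IsMobius mu) :
    ∑ a, mobiusError ρ mu ⊥ a = -∑ a, (-1 : ℤ) ^ ρ a := by
  have hrow := hmu.2 ⊥ ⊤ hgr.bot_lt_top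
  rw [filter_bot_le_le_top_eq_univ] at hrow
  simp only [mobiusError, sum_sub_distrib, hrow, hgr.1, Nat.sub_zero, zero_sub]

lemma IsMobius.sum_mobiusError_top (hgr : IsGraded ρ d) (hmu : IsMobius mu) :
    ∑ a, mobiusError ρ mu a ⊤ = -(-1) ^ (d + 1) * ∑ a, (-1 : ℤ) ^ ρ a := by
  have hcol := hmu.sum_mu_left_eq_zero hgr.bot_lt_top
  rw [filter_bot_le_le_top_eq_univ] at hcol
  simp only [mobiusError, sum_sub_distrib, hcol, hgr.2.1, zero_sub, neg_mul, mul_sum,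
    sum_neg_distrib, neg_inj]
  exact sum_congr rfl fun a _ => neg_one_pow_sub_of_le (hgr.rank_le a)

end Bounded

section SingSums

variable {P : Type*} [Fintype P] [DecidableEq P] [PartialOrder P] [BoundedOrder P]
  {ρ : P → ℕ} {d : ℕ} {mu : P → P → ℤ}

lemma JSing.sum_mobiusError_bot (hgr : IsGraded ρ d) {j : ℤ}
    (hsing : JSing ρ mu (j + 1).toNat ⊥ ⊤) :
    ∑ a, mobiusError ρ mu ⊥ a =
      ∑ t ∈ univ.filter (fun t : P => (d : ℤ) - j + 1 ≤ ρ t ∧ ρ t ≤ d), mobiusError ρ mu ⊥ t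
        + mobiusError ρ mu ⊥ ⊤ := by
  rw [add_comm, ← sum_insert (by simp [hgr.2.1])]
  refine (sum_subset (subset_univ _) fun a _ ha => ?_).symm
  simp only [mem_insert, mem_filter, mem_univ, true_and, not_or, not_and, not_le] at ha
  have := hgr.rank_le a
  have := mt hgr.eq_top_of_rank_eq ha.1
  exact hsing.mobiusError_eq_zero hgr bot_le (by rw [hgr.1]; omega)

lemma JSing.sum_mobiusError_top (hgr : IsGraded ρ d) {j : ℤ}
    (hsing : JSing ρ mu (j + 1).toNat ⊥ ⊤) :
    ∑ a, mobiusError ρ mu a ⊤ =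
      ∑ t ∈ univ.filter (fun t : P => 1 ≤ ρ t ∧ (ρ t : ℤ) ≤ j), mobiusError ρ mu t ⊤
        + mobiusError ρ mu ⊥ ⊤ := by
  rw [add_comm, ← sum_insert (f := fun t => mobiusError ρ mu t ⊤) (by simp [hgr.1])]
  refine (sum_subset (subset_univ _) fun a _ ha => ?_).symm
  simp only [mem_insert, mem_filter, mem_univ, true_and, not_or, not_and, not_le] at ha
  have := mt hgr.eq_bot_of_rank_eq_zero ha.1
  exact hsing.mobiusError_eq_zero hgr le_top (by rw [hgr.2.1]; omega)

end SingSums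

theorem jSing_error_relations_general (d : ℕ) (ρ : α → ℕ) (mu : α → α → ℤ)
    (hgr : IsGraded ρ d) (hmu : IsMobius mu) (j : ℤ)
    (hsing : JSing ρ mu (j + 1).toNat ⊥ ⊤) :
    (Even d →
      2 * (mu ⊥ ⊤ - (-1 : ℤ) ^ (d + 1)) =
        -∑ t ∈ Finset.univ.filter (fun t : α => 1 ≤ ρ t ∧ (ρ t : ℤ) ≤ j),
            (mu t ⊤ - (-1 : ℤ) ^ (ρ ⊤ - ρ t))
        - ∑ t ∈ Finset.univ.filter (fun t : α => (d : ℤ) - j + 1 ≤ (ρ t : ℤ) ∧ ρ t ≤ d),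
            (mu ⊥ t - (-1 : ℤ) ^ (ρ t - ρ ⊥))) ∧
    (Odd d →
      ∑ t ∈ Finset.univ.filter (fun t : α => 1 ≤ ρ t ∧ (ρ t : ℤ) ≤ j),
          (mu t ⊤ - (-1 : ℤ) ^ (ρ ⊤ - ρ t))
        = ∑ t ∈ Finset.univ.filter (fun t : α => (d : ℤ) - j + 1 ≤ (ρ t : ℤ) ∧ ρ t ≤ d),
            (mu ⊥ t - (-1 : ℤ) ^ (ρ t - ρ ⊥))) := by
  have hrow := (hmu.sum_mobiusError_bot hgr).symm.trans (hsing.sum_mobiusError_bot hgr)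
  have hcol := (hmu.sum_mobiusError_top hgr).symm.trans (hsing.sum_mobiusError_top hgr)
  have hbot_top : mobiusError ρ mu ⊥ ⊤ = mu ⊥ ⊤ - (-1) ^ (d + 1) := by
    rw [mobiusError, hgr.1, hgr.2.1, Nat.sub_zero]
  rw [hbot_top] at hrow hcol
  simp only [mobiusError] at hrow hcol
  refine ⟨fun hd => ?_, fun hd => ?_⟩
  · rw [hd.add_one.neg_one_pow] at hrow hcol ⊢
    linarith
  · rw [hd.add_one.neg_one_pow] at hrow hcol
    linarith

/-- error relations for a `j`-Sing poset of rank `d+1`: writing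
`e(s,t) = μ(s,t) - (-1)^{ρ(t)-ρ(s)}`, if `d` is even then
`2·e(0̂,1̂) = -∑_{1 ≤ ρ(t) ≤ j} e(t,1̂) - ∑_{d-j+1 ≤ ρ(t) ≤ d} e(0̂,t)`,
and if `d` is odd then `∑_{1 ≤ ρ(t) ≤ j} e(t,1̂) = ∑_{d-j+1 ≤ ρ(t) ≤ d} e(0̂,t)`. -/
theorem jSing_error_relations (d : ℕ) (ρ : α → ℕ) (mu : α → α → ℤ)
    (hgr : IsGraded ρ d) (hmu : IsMobius mu)
    (j : ℤ) (hj : -1 ≤ j) (hjd : j ≤ d)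
    (hsing : JSing ρ mu (j + 1).toNat ⊥ ⊤) :
    (Even d →
      2 * (mu ⊥ ⊤ - (-1 : ℤ) ^ (d + 1)) =
        -∑ t ∈ Finset.univ.filter (fun t : α => 1 ≤ ρ t ∧ (ρ t : ℤ) ≤ j),
            (mu t ⊤ - (-1 : ℤ) ^ (ρ ⊤ - ρ t))
        - ∑ t ∈ Finset.univ.filter (fun t : α => (d : ℤ) - j + 1 ≤ (ρ t : ℤ) ∧ ρ t ≤ d),
            (mu ⊥ t - (-1 : ℤ) ^ (ρ t - ρ ⊥))) ∧
    (Odd d →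
      ∑ t ∈ Finset.univ.filter (fun t : α => 1 ≤ ρ t ∧ (ρ t : ℤ) ≤ j),
          (mu t ⊤ - (-1 : ℤ) ^ (ρ ⊤ - ρ t))
        = ∑ t ∈ Finset.univ.filter (fun t : α => (d : ℤ) - j + 1 ≤ (ρ t : ℤ) ∧ ρ t ≤ d),
            (mu ⊥ t - (-1 : ℤ) ^ (ρ t - ρ ⊥))) :=
  jSing_error_relations_general d ρ mu hgr hmu j hsing
end
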